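/- arXiv:1801.06754 — 8 statements merged into one kernel-verified Lean document; each statement's English description precedes it below -/
import Mathlib

section
/- Let G be a finite simple graph whose vertex set is partitioned into disjoint sets V_1, ..., V_t, and let c_1, ..., c_t be positive reals such that the sum-color cost of the induced subgraph satisfies ŝ(G[V_i]) ≤ c_i·|V_i| for each i. Then ŝ(G) ≤ ( Σ_{i=1}^{t} √(c_i·|V_i|) )². -/
open Finset

/-- Auxiliary fuelled recursion for the slow-coloring game value.
`slowAux G n S` computes the value of the slow-coloring game on the
subgraph of `G` induced by the set `S` of (uncolored) vertices, provided
`n ≥ S.card`. -/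
noncomputable def slowAux {V : Type*} [DecidableEq V] (G : SimpleGraph V) :
    ℕ → Finset V → ℕ
  | 0, _ => 0
  | n + 1, S =>
      (S.powerset.filter fun M => M.Nonempty).sup fun M =>
        M.card + sInf {k : ℕ | ∃ X : Finset V, X ⊆ M ∧ X.Nonempty ∧
          (∀ x ∈ X, ∀ y ∈ X, ¬ G.Adj x y) ∧ k = slowAux G n (S \ X)}

/-- The sum-color cost `ŝ(G[S])` of the subgraph of `G` induced by the
vertex set `S`. -/
noncomputable def slowCost {V : Type*} [DecidableEq V] (G : SimpleGraph V)
    (S : Finset V) : ℕ :=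
  slowAux G S.card S

/-!
Put `r i = √(c i · |V_i|)` and `β = ∑ r i`. Painter answers a marked set `M` by choosing the
part `j` that maximises `|M ∩ V_j| / r j`, so that `|M| ≤ (β / r j) |M ∩ V_j|`, and then plays an
optimal answer of the game on `G[V_j]` restricted to `M ∩ V_j`. This keeps the potential
`∑ i, (β / r i) ŝ(G[U ∩ V_i])` of the uncoloured set `U` decreasing by at least the score of every
round, and initially the potential is at most `∑ i, (β / r i) r i ^ 2 = β ^ 2`.
-/

section SlowCost

variable {V : Type*} [DecidableEq V] (G : SimpleGraph V)

noncomputable def slowStep (S : Finset V) (f : Finset V → ℕ) : ℕ :=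
  (S.powerset.filter fun M => M.Nonempty).sup fun M =>
    M.card + sInf {k : ℕ | ∃ X : Finset V, X ⊆ M ∧ X.Nonempty ∧
      (∀ x ∈ X, ∀ y ∈ X, ¬ G.Adj x y) ∧ k = f (S \ X)}

lemma slowAux_succ (n : ℕ) (S : Finset V) : slowAux G (n + 1) S = slowStep G S (slowAux G n) :=
  rfl

lemma slowStep_congr {S : Finset V} {f g : Finset V → ℕ}
    (h : ∀ X ⊆ S, X.Nonempty → f (S \ X) = g (S \ X)) : slowStep G S f = slowStep G S g := by
  refine sup_congr rfl fun M hM => ?_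
  have hMS := mem_powerset.1 (mem_filter.1 hM).1
  congr 2
  ext k
  refine exists_congr fun X => and_congr_right fun hXM => and_congr_right fun hX => ?_
  rw [h X (hXM.trans hMS) hX]

lemma slowStep_empty (f : Finset V → ℕ) : slowStep G ∅ f = 0 := by
  simp [slowStep]

lemma slowAux_empty (n : ℕ) : slowAux G n (∅ : Finset V) = 0 := by
  cases n with
  | zero => rfl
  | succ n => exact slowStep_empty G _

lemma slowCost_empty : slowCost G (∅ : Finset V) = 0 :=
  slowAux_empty G 0

lemma slowAux_eq_slowCost {n : ℕ} {S : Finset V} (hS : S.card ≤ n) :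
    slowAux G n S = slowCost G S := by
  induction n using Nat.strong_induction_on generalizing S with
  | _ n ih =>
    rcases S.eq_empty_or_nonempty with rfl | hne
    · rw [slowAux_empty, slowCost_empty]
    obtain ⟨m, hm⟩ : ∃ m, S.card = m + 1 := ⟨S.card - 1, by have := hne.card_pos; omega⟩
    obtain ⟨k, rfl⟩ : ∃ k, n = k + 1 := ⟨n - 1, by omega⟩
    rw [slowCost, hm, slowAux_succ, slowAux_succ]
    refine slowStep_congr G fun X hXS hX => ?_
    have := card_lt_card (sdiff_ssubset hXS hX)
    rw [ih k (by omega) (by omega), ih m (by omega) (by omega)]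

lemma slowCost_eq_slowStep (S : Finset V) : slowCost G S = slowStep G S (slowCost G) := by
  rcases S.eq_empty_or_nonempty with rfl | hne
  · rw [slowCost_empty, slowStep_empty]
  obtain ⟨m, hm⟩ : ∃ m, S.card = m + 1 := ⟨S.card - 1, by have := hne.card_pos; omega⟩
  rw [slowCost, hm, slowAux_succ]
  refine slowStep_congr G fun X hXS hX => slowAux_eq_slowCost G ?_
  have := card_lt_card (sdiff_ssubset hXS hX)
  omega

lemma exists_card_add_slowCost_sdiff_le {S M : Finset V} (hMS : M ⊆ S) (hM : M.Nonempty) :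
    ∃ X ⊆ M, X.Nonempty ∧ (∀ x ∈ X, ∀ y ∈ X, ¬ G.Adj x y) ∧
      M.card + slowCost G (S \ X) ≤ slowCost G S := by
  obtain ⟨v, hv⟩ := hM
  set T := {k : ℕ | ∃ X : Finset V, X ⊆ M ∧ X.Nonempty ∧
    (∀ x ∈ X, ∀ y ∈ X, ¬ G.Adj x y) ∧ k = slowCost G (S \ X)}
  have hT : T.Nonempty :=
    ⟨_, {v}, singleton_subset_iff.2 hv, singleton_nonempty v, by simp, rfl⟩
  obtain ⟨X, hXM, hX, hXind, hXT⟩ := Nat.sInf_mem hT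
  refine ⟨X, hXM, hX, hXind, ?_⟩
  calc M.card + slowCost G (S \ X) = M.card + sInf T := by rw [hXT]
    _ ≤ slowStep G S (slowCost G) :=
      Finset.le_sup (f := fun M => M.card + sInf {k : ℕ | ∃ X : Finset V, X ⊆ M ∧ X.Nonempty ∧
        (∀ x ∈ X, ∀ y ∈ X, ¬ G.Adj x y) ∧ k = slowCost G (S \ X)})
        (mem_filter.2 ⟨mem_powerset.2 hMS, v, hv⟩)
    _ = slowCost G S := (slowCost_eq_slowStep G S).symm

lemma card_le_slowCost (S : Finset V) : S.card ≤ slowCost G S := by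
  rcases S.eq_empty_or_nonempty with rfl | hS
  · simp
  obtain ⟨X, -, -, -, h⟩ := exists_card_add_slowCost_sdiff_le G subset_rfl hS
  omega

lemma slowCost_le_of_forall_exists {S : Finset V} (hS : S.Nonempty) {b : ℝ}
    (h : ∀ M ⊆ S, M.Nonempty → ∃ X ⊆ M, X.Nonempty ∧ (∀ x ∈ X, ∀ y ∈ X, ¬ G.Adj x y) ∧
      (M.card : ℝ) + slowCost G (S \ X) ≤ b) :
    (slowCost G S : ℝ) ≤ b := by
  have hb : 0 ≤ b := by
    obtain ⟨X, -, -, -, hX⟩ := h S subset_rfl hS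
    exact (by positivity : (0 : ℝ) ≤ S.card + slowCost G (S \ X)).trans hX
  rw [← Nat.le_floor_iff hb, slowCost_eq_slowStep]
  refine Finset.sup_le fun M hM => ?_
  obtain ⟨hMS, hMne⟩ := mem_filter.1 hM
  obtain ⟨X, hXM, hX, hXind, hXb⟩ := h M (mem_powerset.1 hMS) hMne
  rw [Nat.le_floor_iff hb]
  refine le_trans ?_ hXb
  push_cast
  gcongr
  exact Nat.sInf_le ⟨X, hXM, hX, hXind, rfl⟩

end SlowCost

lemma exists_sum_le_sum_div_mul {ι : Type*} [Fintype ι] [Nonempty ι] (a r : ι → ℝ)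
    (hr : ∀ i, 0 ≤ r i) (har : ∀ i, r i = 0 → a i = 0) :
    ∃ j, ∑ i, a i ≤ (∑ i, r i) / r j * a j := by
  obtain ⟨j, -, hj⟩ := exists_max_image univ (fun i => a i / r i) univ_nonempty
  refine ⟨j, ?_⟩
  have hle : ∀ i, a i ≤ a j / r j * r i := fun i => by
    rcases (hr i).eq_or_lt with h | h
    · simp [har i h.symm, ← h]
    · calc a i = a i / r i * r i := (div_mul_cancel₀ _ h.ne').symm
        _ ≤ a j / r j * r i := mul_le_mul_of_nonneg_right (hj i (mem_univ i)) h.le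
  calc ∑ i, a i ≤ ∑ i, a j / r j * r i := sum_le_sum fun i _ => hle i
    _ = (∑ i, r i) / r j * a j := by rw [← mul_sum]; ring

section Partition

open Function

variable {V ι : Type*} [DecidableEq V] [Fintype ι] (Vs : ι → Finset V)

lemma card_le_sum_card_inter (hcover : ∀ v, ∃ i, v ∈ Vs i) (M : Finset V) :
    M.card ≤ ∑ i, (M ∩ Vs i).card :=
  calc M.card ≤ (univ.biUnion fun i => M ∩ Vs i).card := card_le_card fun v hv => by
        obtain ⟨i, hi⟩ := hcover v
        exact mem_biUnion.2 ⟨i, mem_univ i, mem_inter.2 ⟨hv, hi⟩⟩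
    _ ≤ ∑ i, (M ∩ Vs i).card := card_biUnion_le

lemma exists_card_le_sum_div_mul_card_inter (r : ι → ℝ) (hr : ∀ i, 0 ≤ r i)
    (hrz : ∀ i, r i = 0 → Vs i = ∅) (hcover : ∀ v, ∃ i, v ∈ Vs i) {M : Finset V}
    (hM : M.Nonempty) :
    ∃ j, (M ∩ Vs j).Nonempty ∧ (M.card : ℝ) ≤ (∑ i, r i) / r j * (M ∩ Vs j).card := by
  have : Nonempty ι := by
    obtain ⟨v, -⟩ := hM
    exact (hcover v).nonempty
  obtain ⟨j, hj⟩ := exists_sum_le_sum_div_mul (fun i => ((M ∩ Vs i).card : ℝ)) r hr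
    fun i hi => by simp [hrz i hi]
  have hcard : (M.card : ℝ) ≤ (∑ i, r i) / r j * (M ∩ Vs j).card :=
    le_trans (by exact_mod_cast card_le_sum_card_inter Vs hcover M) hj
  refine ⟨j, ?_, hcard⟩
  by_contra hempty
  rw [not_nonempty_iff_eq_empty.1 hempty] at hcard
  simp [hM.ne_empty] at hcard

lemma sum_inter_sdiff_add {A : Type*} [AddCommMonoid A] (hdisj : Pairwise (Disjoint on Vs))
    (g : ι → Finset V → A) (S : Finset V) {X : Finset V} {j : ι} (hX : X ⊆ Vs j) :
    ∑ i, g i ((S \ X) ∩ Vs i) + g j (S ∩ Vs j) = ∑ i, g i (S ∩ Vs i) + g j ((S ∩ Vs j) \ X) := by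
  classical
  have hoff : ∀ i ≠ j, (S \ X) ∩ Vs i = S ∩ Vs i := fun i hi => by
    rw [sdiff_inter_right_comm, sdiff_eq_self_of_disjoint]
    exact (hdisj hi).mono inter_subset_right hX
  rw [← add_sum_erase _ _ (mem_univ j), ← add_sum_erase _ _ (mem_univ j),
    sum_congr rfl fun i hi => by rw [hoff i (ne_of_mem_erase hi)], sdiff_inter_right_comm]
  abel

theorem slowCost_le_sum_div_mul_slowCost_inter (G : SimpleGraph V) (r : ι → ℝ)
    (hr : ∀ i, 0 ≤ r i) (hrz : ∀ i, r i = 0 → Vs i = ∅) (hdisj : Pairwise (Disjoint on Vs))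
    (hcover : ∀ v, ∃ i, v ∈ Vs i) (S : Finset V) :
    (slowCost G S : ℝ) ≤ ∑ i, (∑ k, r k) / r i * slowCost G (S ∩ Vs i) := by
  induction S using Finset.strongInduction with
  | H S ih =>
    rcases S.eq_empty_or_nonempty with rfl | hS
    · simp [slowCost_empty]
    refine slowCost_le_of_forall_exists G hS fun M hMS hM => ?_
    obtain ⟨j, hMj, hcard⟩ := exists_card_le_sum_div_mul_card_inter Vs r hr hrz hcover hM
    obtain ⟨X, hXM, hX, hXind, hXcost⟩ :=
      exists_card_add_slowCost_sdiff_le G (inter_subset_inter_right hMS) hMj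
    refine ⟨X, hXM.trans inter_subset_left, hX, hXind, ?_⟩
    have hXS : X ⊆ S := (hXM.trans inter_subset_left).trans hMS
    have hIH := ih (S \ X) (sdiff_ssubset hXS hX)
    have hsplit := sum_inter_sdiff_add Vs hdisj
      (fun i T => (∑ k, r k) / r i * (slowCost G T : ℝ)) S (hXM.trans inter_subset_right)
    have hj : (∑ k, r k) / r j * ((M ∩ Vs j).card + slowCost G ((S ∩ Vs j) \ X))
        ≤ (∑ k, r k) / r j * slowCost G (S ∩ Vs j) := by
      have : 0 ≤ (∑ k, r k) / r j := div_nonneg (sum_nonneg fun k _ => hr k) (hr j)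
      gcongr
      exact_mod_cast hXcost
    linarith

end Partition

theorem stmt_0_general {V : Type*} [Fintype V] [DecidableEq V] (G : SimpleGraph V)
    (t : ℕ) (Vs : Fin t → Finset V) (c : Fin t → ℝ)
    (hdisj : ∀ i j, i ≠ j → Disjoint (Vs i) (Vs j))
    (hcover : ∀ v : V, ∃ i, v ∈ Vs i)
    (hbound : ∀ i, (slowCost G (Vs i) : ℝ) ≤ c i * (Vs i).card) :
    (slowCost G Finset.univ : ℝ) ≤ (∑ i, Real.sqrt (c i * (Vs i).card)) ^ 2 := by
  set r : Fin t → ℝ := fun i => Real.sqrt (c i * (Vs i).card)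
  have hsq : ∀ i, r i ^ 2 = c i * (Vs i).card := fun i =>
    Real.sq_sqrt ((Nat.cast_nonneg _).trans (hbound i))
  have hrz : ∀ i, r i = 0 → Vs i = ∅ := fun i hi => by
    have h0 : (slowCost G (Vs i) : ℝ) ≤ 0 := by simpa [← hsq i, hi] using hbound i
    exact card_eq_zero.1 (Nat.le_zero.1 ((card_le_slowCost G _).trans (by exact_mod_cast h0)))
  calc (slowCost G univ : ℝ)
      ≤ ∑ i, (∑ k, r k) / r i * slowCost G (univ ∩ Vs i) :=
        slowCost_le_sum_div_mul_slowCost_inter Vs G r (fun i => Real.sqrt_nonneg _) hrz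
          (fun i j => hdisj i j) hcover univ
    _ ≤ ∑ i, (∑ k, r k) / r i * r i ^ 2 := by
        gcongr with i
        rw [univ_inter, hsq]
        exact hbound i
    _ = (∑ i, r i) ^ 2 := by
        rw [sq, mul_sum]
        refine sum_congr rfl fun i _ => ?_
        rcases eq_or_ne (r i) 0 with h | h
        · simp [h]
        · field_simp

theorem stmt_0 {V : Type*} [Fintype V] [DecidableEq V] (G : SimpleGraph V)
    (t : ℕ) (Vs : Fin t → Finset V) (c : Fin t → ℝ)
    (hdisj : ∀ i j, i ≠ j → Disjoint (Vs i) (Vs j))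
    (hcover : ∀ v : V, ∃ i, v ∈ Vs i)
    (hc : ∀ i, 0 < c i)
    (hbound : ∀ i, (slowCost G (Vs i) : ℝ) ≤ c i * (Vs i).card) :
    (slowCost G Finset.univ : ℝ) ≤ (∑ i, Real.sqrt (c i * (Vs i).card)) ^ 2 :=
  stmt_0_general G t Vs c hdisj hcover hbound
end

section
/- Let G be an n-vertex complete k-partite graph with parts of sizes r_1, ..., r_k (that is, V(G) is partitioned into independent sets R_1, ..., R_k with |R_i| = r_i, and two vertices are adjacent if and only if they lie in different parts). Then the sum-color cost satisfies ŝ(G) ≤ n + 2·Σ_{1 ≤ i < j ≤ k} √(r_i·r_j). -/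
open Finset

open Function

/-! Painter plays against the potential `Φ(S) = (∑ᵢ √|S ∩ Rᵢ|)²` of the uncolored set `S`:
against a marked set `M` she colors `M ∩ Rᵢ` for a part `i` maximizing `|M ∩ Rᵢ| / √|S ∩ Rᵢ|`.
If `a` and `b` are `√|S ∩ Rᵢ|` before and after this move, then every part satisfies
`|M ∩ Rⱼ| ≤ (a - b)(√|S ∩ Rⱼ| + √|S' ∩ Rⱼ|)` with `S'` the new uncolored set, and summing over `j`
shows that `Φ` drops by at least `|M|`. Hence `ŝ(G) ≤ Φ(V) = (∑ᵢ √rᵢ)²`. -/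

theorem sq_sum_eq_sum_sq_add_two_mul_sum_lt {ι R : Type*} [LinearOrder ι] [CommSemiring R]
    (s : Finset ι) (f : ι → R) :
    (∑ i ∈ s, f i) ^ 2 = ∑ i ∈ s, f i ^ 2 + 2 * ∑ i ∈ s, ∑ j ∈ s with i < j, f i * f j := by
  have hsplit : ∀ i ∈ s, ∑ j ∈ s, f i * f j =
      f i ^ 2 + (∑ j ∈ s with i < j, f i * f j + ∑ j ∈ s with j < i, f i * f j) := by
    intro i hi
    rw [← sum_filter_add_sum_filter_not s (· = i), filter_eq' s i, if_pos hi, sum_singleton,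
      sq, ← sum_filter_add_sum_filter_not (s.filter (· ≠ i)) (i < ·)]
    simp only [filter_filter]
    congr 2 <;> refine sum_congr (filter_congr fun j _ => ?_) fun _ _ => rfl <;> grind
  have hswap : ∑ i ∈ s, ∑ j ∈ s with j < i, f i * f j =
      ∑ i ∈ s, ∑ j ∈ s with i < j, f i * f j := by
    rw [sum_comm' (t' := s) (s' := fun j => s.filter (j < ·))
      (by intro x y; simp only [mem_filter]; tauto)]
    simp_rw [mul_comm]
  rw [sq, sum_mul_sum, sum_congr rfl hsplit, sum_add_distrib, sum_add_distrib, hswap]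
  ring

theorem sum_add_sq_sum_sqrt_update_le {ι : Type*} [Fintype ι] [DecidableEq ι]
    {s m : ι → ℝ} {i : ι} (hm : ∀ j, 0 ≤ m j) (hmi : m i ≤ s i) (hsi : 0 < s i)
    (hmax : ∀ j, m j * √(s i) ≤ m i * √(s j)) :
    ∑ j, m j + (∑ j, √(update s i (s i - m i) j)) ^ 2 ≤ (∑ j, √(s j)) ^ 2 := by
  set a := √(s i)
  set b := √(s i - m i)
  have ha : 0 < a := Real.sqrt_pos.2 hsi
  have hba : b ≤ a := Real.sqrt_le_sqrt (by linarith [hm i])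
  have hmi_eq : m i = (a - b) * (a + b) := by
    linear_combination Real.sq_sqrt (sub_nonneg.2 hmi) - Real.sq_sqrt hsi.le
  have hpoint : ∀ j, m j ≤ (a - b) * (√(s j) + √(update s i (s i - m i) j)) := by
    intro j
    rcases eq_or_ne j i with rfl | hji
    · rw [update_self]
      exact hmi_eq.le
    · rw [update_of_ne hji]
      -- `(a + b) / a ≤ 2` since `b ≤ a`
      have hgap : 0 ≤ (a - b) * (a - b) * √(s j) := by
        have := sub_nonneg.2 hba
        positivity
      refine le_of_mul_le_mul_right ?_ ha
      linear_combination hmax j + hmi_eq * √(s j) + hgap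
  have hdiff : ∑ j, √(s j) - ∑ j, √(update s i (s i - m i) j) = a - b := by
    rw [← sum_sub_distrib, sum_eq_single i (fun j _ hji => by simp [hji]) (by simp)]
    simp [a, b]
  calc ∑ j, m j + (∑ j, √(update s i (s i - m i) j)) ^ 2
      ≤ ∑ j, (a - b) * (√(s j) + √(update s i (s i - m i) j))
        + (∑ j, √(update s i (s i - m i) j)) ^ 2 := by gcongr with j; exact hpoint j
    _ = (∑ j, √(s j)) ^ 2 := by
      rw [← mul_sum, sum_add_distrib, ← hdiff]
      ring

theorem exists_sum_add_sq_sum_sqrt_update_le {ι : Type*} [Fintype ι] [DecidableEq ι]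
    {s m : ι → ℝ} (hm : ∀ j, 0 ≤ m j) (hms : ∀ j, m j ≤ s j) (hpos : ∃ j, 0 < m j) :
    ∃ i, 0 < m i ∧
      ∑ j, m j + (∑ j, √(update s i (s i - m i) j)) ^ 2 ≤ (∑ j, √(s j)) ^ 2 := by
  obtain ⟨i₀, hi₀⟩ := hpos
  obtain ⟨i, -, hi⟩ := exists_max_image univ (fun j => m j / √(s j)) ⟨i₀, mem_univ i₀⟩
  have hsqrt : ∀ j, 0 < m j → 0 < √(s j) := fun j h => Real.sqrt_pos.2 (h.trans_le (hms j))
  have hmi : 0 < m i := by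
    refine (hm i).lt_of_ne fun h => ?_
    have := (div_pos hi₀ (hsqrt i₀ hi₀)).trans_le (hi i₀ (mem_univ i₀))
    simp [← h] at this
  refine ⟨i, hmi, sum_add_sq_sum_sqrt_update_le hm (hms i) (hmi.trans_le (hms i)) fun j => ?_⟩
  rcases (hm j).eq_or_lt with h | h
  · rw [← h, zero_mul]
    exact mul_nonneg hmi.le (Real.sqrt_nonneg _)
  · exact (div_le_div_iff₀ (hsqrt j h) (hsqrt i hmi)).1 (hi j (mem_univ j))

theorem card_eq_sum_card_inter {V ι : Type*} [DecidableEq V] [Fintype ι] {R : ι → Finset V}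
    (hdisj : Pairwise (Disjoint on R)) (hcover : ∀ v, ∃ i, v ∈ R i) (M : Finset V) :
    #M = ∑ i, #(M ∩ R i) := by
  calc #M = #(univ.biUnion fun i => M ∩ R i) := by
        congr 1
        ext v
        simp only [mem_biUnion, mem_univ, true_and, mem_inter]
        exact ⟨fun hv => (hcover v).imp fun _ => And.intro hv, fun ⟨_, hv, _⟩ => hv⟩
    _ = ∑ i, #(M ∩ R i) :=
        card_biUnion fun i _ j _ hij => (hdisj hij).mono inter_subset_right inter_subset_right

theorem slowAux_le_of_potential {V : Type*} [DecidableEq V] (G : SimpleGraph V)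
    (Φ : Finset V → ℝ) (hΦ : ∀ S, 0 ≤ Φ S)
    (hstep : ∀ S M, M ⊆ S → M.Nonempty → ∃ X ⊆ M, X.Nonempty ∧
      (∀ x ∈ X, ∀ y ∈ X, ¬ G.Adj x y) ∧ #M + Φ (S \ X) ≤ Φ S) :
    ∀ n S, (slowAux G n S : ℝ) ≤ Φ S := by
  intro n
  induction n with
  | zero => simpa [slowAux] using hΦ
  | succ n ih =>
    intro S
    rw [← Nat.le_floor_iff (hΦ S), slowAux, Finset.sup_le_iff]
    intro M hM
    obtain ⟨hMS, hMne⟩ := by simpa only [mem_filter, mem_powerset] using hM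
    obtain ⟨X, hXM, hXne, hXind, hle⟩ := hstep S M hMS hMne
    have hinf : sInf {k : ℕ | ∃ X : Finset V, X ⊆ M ∧ X.Nonempty ∧
        (∀ x ∈ X, ∀ y ∈ X, ¬ G.Adj x y) ∧ k = slowAux G n (S \ X)} ≤ slowAux G n (S \ X) :=
      Nat.sInf_le ⟨X, hXM, hXne, hXind, rfl⟩
    rw [Nat.le_floor_iff (hΦ S)]
    push_cast
    linarith [ih (S \ X), (Nat.cast_le (α := ℝ)).2 hinf]

noncomputable def sqrtPartPotential {V ι : Type*} [DecidableEq V] [Fintype ι]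
    (R : ι → Finset V) (S : Finset V) : ℝ :=
  (∑ i, √(#(S ∩ R i) : ℝ)) ^ 2

theorem exists_indep_card_add_sqrtPartPotential_sdiff_le {V ι : Type*} [DecidableEq V]
    [Fintype ι] [DecidableEq ι] {G : SimpleGraph V} {R : ι → Finset V}
    (hdisj : Pairwise (Disjoint on R)) (hcover : ∀ v, ∃ i, v ∈ R i)
    (hind : ∀ i, G.IsIndepSet (R i : Set V)) {S M : Finset V} (hMS : M ⊆ S)
    (hM : M.Nonempty) :
    ∃ X ⊆ M, X.Nonempty ∧ (∀ x ∈ X, ∀ y ∈ X, ¬ G.Adj x y) ∧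
      #M + sqrtPartPotential R (S \ X) ≤ sqrtPartPotential R S := by
  obtain ⟨v, hv⟩ := hM
  obtain ⟨i, hmi, hle⟩ := exists_sum_add_sq_sum_sqrt_update_le
    (s := fun j => (#(S ∩ R j) : ℝ)) (m := fun j => (#(M ∩ R j) : ℝ))
    (fun j => Nat.cast_nonneg _)
    (fun j => Nat.cast_le.2 (card_le_card (inter_subset_inter_right hMS)))
    ((hcover v).imp fun j hj => Nat.cast_pos.2 (card_pos.2 ⟨v, mem_inter.2 ⟨hv, hj⟩⟩))
  refine ⟨M ∩ R i, inter_subset_left, card_pos.1 (Nat.cast_pos.1 hmi), ?_, ?_⟩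
  · intro x hx y hy
    rcases eq_or_ne x y with rfl | hxy
    · exact G.irrefl
    · exact hind i (mem_inter.1 hx).2 (mem_inter.1 hy).2 hxy
  have hcard : ∀ j, (#((S \ (M ∩ R i)) ∩ R j) : ℝ) =
      update (fun j => (#(S ∩ R j) : ℝ)) i (#(S ∩ R i) - #(M ∩ R i)) j := by
    intro j
    rw [sdiff_inter_right_comm]
    rcases eq_or_ne j i with rfl | hji
    · rw [update_self, card_sdiff_of_subset (inter_subset_inter_right hMS),
        Nat.cast_sub (card_le_card (inter_subset_inter_right hMS))]
    · rw [update_of_ne hji, sdiff_eq_self_of_disjoint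
        ((hdisj hji).mono inter_subset_right inter_subset_right)]
  simp only [sqrtPartPotential, hcard]
  rw [card_eq_sum_card_inter hdisj hcover M]
  push_cast
  exact hle

theorem slowCost_le_sqrtPartPotential {V ι : Type*} [DecidableEq V] [Fintype ι] [DecidableEq ι]
    (G : SimpleGraph V) {R : ι → Finset V}
    (hdisj : Pairwise (Disjoint on R)) (hcover : ∀ v, ∃ i, v ∈ R i)
    (hind : ∀ i, G.IsIndepSet (R i : Set V)) (S : Finset V) :
    (slowCost G S : ℝ) ≤ sqrtPartPotential R S :=
  slowAux_le_of_potential G (sqrtPartPotential R) (fun _ => sq_nonneg _)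
    (fun _ _ hMS hM => exists_indep_card_add_sqrtPartPotential_sdiff_le hdisj hcover hind hMS hM)
    _ _

theorem stmt_2 {V : Type*} [Fintype V] [DecidableEq V] (G : SimpleGraph V)
    (k : ℕ) (R : Fin k → Finset V) (r : Fin k → ℕ)
    (hdisj : ∀ i j, i ≠ j → Disjoint (R i) (R j))
    (hcover : ∀ v : V, ∃ i, v ∈ R i)
    (hsize : ∀ i, (R i).card = r i)
    (hadj : ∀ i j (u : V), u ∈ R i → ∀ v ∈ R j, (G.Adj u v ↔ i ≠ j)) :
    (slowCost G Finset.univ : ℝ) ≤ (Fintype.card V : ℝ) +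
      2 * ∑ i : Fin k, ∑ j ∈ Finset.univ.filter (fun j => i < j),
        Real.sqrt ((r i : ℝ) * (r j : ℝ)) := by
  have hdisj' : Pairwise (Disjoint on R) := fun i j => hdisj i j
  have hind : ∀ i, G.IsIndepSet (R i : Set V) := fun i u hu v hv _ =>
    by simp [hadj i i u hu v hv]
  have hcard : (Fintype.card V : ℝ) = ∑ i, (r i : ℝ) := by
    simp [← card_univ, card_eq_sum_card_inter hdisj' hcover univ, hsize]
  calc (slowCost G univ : ℝ) ≤ sqrtPartPotential R univ :=
        slowCost_le_sqrtPartPotential G hdisj' hcover hind univ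
    _ = (∑ i, √(r i : ℝ)) ^ 2 := by simp [sqrtPartPotential, hsize]
    _ = _ := by
      rw [sq_sum_eq_sum_sq_add_two_mul_sum_lt, hcard]
      simp [Real.sq_sqrt, Real.sqrt_mul]
end

section
/- Let G be a k-degenerate finite simple graph, and let k_1, ..., k_t be nonnegative integers with Σ_{i=1}^{t} (k_i + 1) ≥ k + 1. Then the vertex set of G can be partitioned into sets V_1, ..., V_t such that the induced subgraph G[V_i] is k_i-degenerate for each i. -/
/-!
Induction on the vertex set: remove a vertex `v` of degree at most `k`, partition the rest, and
put `v` back into a class `V_i` in which it has at most `k_i` neighbours; such a class exists by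
pigeonhole, since `v` has at most `k < ∑ (k_i + 1)` neighbours in total. Every subset of
`V_i ∪ {v}` then has a vertex of small degree: `v` itself if it lies in the subset, and otherwise
one provided by the degeneracy of `V_i`.
-/

open Finset

/-- A graph is `k`-degenerate if every nonempty (finite) subgraph has a
vertex of degree at most `k`, equivalently every nonempty finite set `A` of
vertices contains a vertex with at most `k` neighbors inside `A`. -/
def Degenerate {W : Type*} (G : SimpleGraph W) (k : ℕ) : Prop :=
  ∀ A : Finset W, A.Nonempty → ∃ v ∈ A, ({u : W | u ∈ A ∧ G.Adj v u}).ncard ≤ k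

theorem Finset.exists_card_fiber_le_of_card_lt_sum {α ι : Type*} [Fintype ι] [DecidableEq ι]
    (s : Finset α) (c : α → ι) (m : ι → ℕ) (hs : #s < ∑ i, (m i + 1)) :
    ∃ i, #{a ∈ s | c a = i} ≤ m i := by
  rw [card_eq_sum_card_fiberwise (f := c) (t := univ) fun _ _ => mem_univ _] at hs
  obtain ⟨i, -, hi⟩ := exists_lt_of_sum_lt hs
  exact ⟨i, Nat.lt_succ_iff.mp hi⟩

namespace SimpleGraph

variable {V : Type*} {G : SimpleGraph V} [DecidableRel G.Adj] {k : ℕ}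
  {S T : Finset V}

variable (G) in
def DegenerateOn (k : ℕ) (S : Finset V) : Prop :=
  ∀ B ⊆ S, B.Nonempty → ∃ v ∈ B, #{u ∈ B | G.Adj v u} ≤ k

theorem degenerateOn_empty : G.DegenerateOn k ∅ :=
  fun _ hB hne => absurd (subset_empty.mp hB) hne.ne_empty

theorem DegenerateOn.mono (hS : G.DegenerateOn k S) (hTS : T ⊆ S) : G.DegenerateOn k T :=
  fun B hB => hS B (hB.trans hTS)

theorem _root_.Degenerate.degenerateOn (h : Degenerate G k) (A : Finset V) :
    G.DegenerateOn k A := by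
  intro B _ hne
  obtain ⟨v, hv, hcard⟩ := h B hne
  refine ⟨v, hv, ?_⟩
  rwa [← Set.ncard_coe_finset, coe_filter]

theorem DegenerateOn.degenerate_induce (hS : G.DegenerateOn k S) :
    Degenerate (G.induce (S : Set V)) k := by
  intro B hne
  obtain ⟨_, hv, hcard⟩ := hS (B.map (Function.Embedding.subtype _))
    (fun _ hv => by obtain ⟨x, -, rfl⟩ := mem_map.mp hv; exact x.2) hne.map
  obtain ⟨x, hxB, rfl⟩ := mem_map.mp hv
  refine ⟨x, hxB, ?_⟩
  rw [filter_map, card_map] at hcard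
  rwa [← Set.ncard_coe_finset, coe_filter] at hcard

variable [DecidableEq V]

theorem DegenerateOn.insert {v : V} (hS : G.DegenerateOn k S) (hv : #{u ∈ S | G.Adj v u} ≤ k) :
    G.DegenerateOn k (insert v S) := by
  intro B hB hne
  by_cases hvB : v ∈ B
  · refine ⟨v, hvB, (card_le_card fun u hu => ?_).trans hv⟩
    obtain ⟨huB, hvu⟩ := mem_filter.mp hu
    exact mem_filter.mpr ⟨(mem_insert.mp (hB huB)).resolve_left hvu.ne', hvu⟩
  · exact hS B (fun u hu => (mem_insert.mp (hB hu)).resolve_left (ne_of_mem_of_not_mem hu hvB)) hne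

theorem DegenerateOn.exists_coloring {ι : Type*} [Fintype ι] [DecidableEq ι] {ks : ι → ℕ}
    (hsum : k + 1 ≤ ∑ i, (ks i + 1)) {A : Finset V} (hA : G.DegenerateOn k A) :
    ∃ c : V → ι, ∀ i, G.DegenerateOn (ks i) {v ∈ A | c v = i} := by
  induction A using Finset.strongInduction with
  | H A ih =>
  rcases A.eq_empty_or_nonempty with rfl | hne
  · have : Nonempty ι := univ_nonempty_iff.mp <|
      nonempty_of_sum_ne_zero (s := univ) (f := fun i => ks i + 1) (by omega)
    exact ⟨fun _ => Classical.arbitrary ι, fun _ => by simpa using degenerateOn_empty⟩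
  obtain ⟨v, hvA, hv⟩ := hA A subset_rfl hne
  obtain ⟨c, hc⟩ := ih (A.erase v) (erase_ssubset hvA) (hA.mono (erase_subset v A))
  have hnbr : #{u ∈ A.erase v | G.Adj v u} < ∑ i, (ks i + 1) :=
    (card_le_card (filter_subset_filter _ (erase_subset v A))).trans_lt (by omega)
  obtain ⟨i, hi⟩ := exists_card_fiber_le_of_card_lt_sum _ c ks hnbr
  refine ⟨Function.update c v i, fun j => ?_⟩
  by_cases hj : j = i
  · subst hj
    refine ((hc j).insert (v := v) ?_).mono ?_
    · simpa only [filter_filter, and_comm] using hi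
    · exact fun u hu => by grind [Function.update_apply]
  · exact (hc j).mono fun u hu => by grind [Function.update_apply]

end SimpleGraph

theorem stmt_5 {V : Type*} [Fintype V] [DecidableEq V] (G : SimpleGraph V)
    (k : ℕ) (hdeg : Degenerate G k)
    (t : ℕ) (ks : Fin t → ℕ) (hsum : k + 1 ≤ ∑ i, (ks i + 1)) :
    ∃ Vs : Fin t → Finset V,
      (∀ i j, i ≠ j → Disjoint (Vs i) (Vs j)) ∧
      (∀ v : V, ∃ i, v ∈ Vs i) ∧
      (∀ i, Degenerate (G.induce (↑(Vs i) : Set V)) (ks i)) := by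
  classical
  obtain ⟨c, hc⟩ := (hdeg.degenerateOn univ).exists_coloring hsum
  refine ⟨fun i => {v | c v = i}, fun i j hij => ?_, fun v => ⟨c v, by simp⟩,
    fun i => (hc i).degenerate_induce⟩
  exact disjoint_filter.mpr fun _ _ hi hj => hij (hi.symm.trans hj)
end

section
/- If G is a 4-colorable finite simple graph with n vertices and m edges (that is, the chromatic number of G is at most 4), then the sum-color cost satisfies ŝ(G) ≤ (8n + 3m)/5. -/
open Finset

/-!
Painter's strategy: fix a proper colouring with colours `0, 1, 2, 3`, order the colour classes
by a permutation `σ`, and answer a marked set `M` with the greedy maximal independent subset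
of `M` built class by class. With `d` the degree inside the uncoloured set, the potential
`∑ min (10 + 5 d) (16 + 3 d)` drops in such a round by at least `weight d + 3 d` for every
coloured vertex and by `2` for every marked uncoloured vertex of degree at most `3` (which loses
a neighbour where the weight has slope `5`). A vertex of `M` whose colour precedes the colours
of its marked neighbours is coloured, which happens for at least `1 / (min d 3 + 1)` of the
`24` orderings; averaging, some ordering lowers the potential by `10 |M|`. Hence
`10 ŝ(G) ≤ ∑ (16 + 3 d) = 16 n + 6 m`.
-/

open Equiv

section Perm

variable {α : Type*} [LinearOrder α]

lemma mul_swap_apply_lt {T : Finset α} {σ : Perm α} {c c' : α}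
    (hσ : ∀ b ∈ T, b ≠ c → σ c < σ b) (hc' : c' ∈ T) :
    ∀ b ∈ T, b ≠ c' → (σ * swap c c') c' < (σ * swap c c') b := by
  intro b hb hbc'
  rcases eq_or_ne c c' with rfl | hcc'
  · simpa using hσ b hb hbc'
  rw [Perm.mul_apply, Perm.mul_apply, swap_apply_right]
  rcases eq_or_ne b c with rfl | hbc
  · rw [swap_apply_left]; exact hσ c' hc' (Ne.symm hcc')
  · rw [swap_apply_of_ne_of_ne hbc hbc']; exact hσ b hb hbc

lemma card_add_one_mul_card_filter_perm_lt [Fintype α] {a : α} {D : Finset α} (ha : a ∉ D) :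
    (#D + 1) * #{σ : Perm α | ∀ b ∈ D, σ a < σ b} = (Fintype.card α).factorial := by
  set T := insert a D
  let F : α → Finset (Perm α) := fun c => {σ | ∀ b ∈ T, b ≠ c → σ c < σ b}
  have mem_F : ∀ {c σ}, σ ∈ F c ↔ ∀ b ∈ T, b ≠ c → σ c < σ b := by simp [F]
  have hFa : F a = ({σ : Perm α | ∀ b ∈ D, σ a < σ b} : Finset (Perm α)) := by
    ext σ
    simp only [mem_F, T, mem_filter, mem_univ, true_and, mem_insert, forall_eq_or_imp, ne_eq,
      not_true_eq_false, IsEmpty.forall_iff]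
    exact ⟨fun h b hb => h b hb (ne_of_mem_of_not_mem hb ha), fun h b hb _ => h b hb⟩
  have hF : ∀ c ∈ T, #(F c) = #(F a) := fun c hc =>
    card_nbij' (· * swap c a) (· * swap a c)
      (fun σ hσ => mem_F.mpr (mul_swap_apply_lt (mem_F.mp hσ) (mem_insert_self a D)))
      (fun σ hσ => mem_F.mpr (mul_swap_apply_lt (mem_F.mp hσ) hc))
      (fun σ _ => by simp [swap_comm a c, mul_assoc])
      (fun σ _ => by simp [swap_comm a c, mul_assoc])
  have hcover : T.biUnion F = univ := by
    refine eq_univ_of_forall fun σ => ?_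
    obtain ⟨c, hc, hmin⟩ := T.exists_min_image σ (insert_nonempty a D)
    exact mem_biUnion.mpr ⟨c, hc, mem_F.mpr fun b hb hbc =>
      lt_of_le_of_ne (hmin b hb) (σ.injective.ne (Ne.symm hbc))⟩
  have hdisj : (T : Set α).PairwiseDisjoint F := fun c hc c' hc' hcc' =>
    disjoint_left.mpr fun σ h h' =>
      lt_asymm (mem_F.mp h c' hc' (Ne.symm hcc')) (mem_F.mp h' c hc hcc')
  rw [← hFa, ← card_insert_of_notMem ha, ← Fintype.card_perm, ← card_univ, ← hcover,
    card_biUnion hdisj, sum_congr rfl hF, sum_const, smul_eq_mul]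

end Perm

namespace SlowColoring

section Greedy

variable {V : Type*} [DecidableEq V] (G : SimpleGraph V) [DecidableRel G.Adj]
  (M : Finset V) (c : V → ℕ)

def greedyIndep : ℕ → Finset V
  | 0 => ∅
  | n + 1 => greedyIndep n ∪ {u ∈ M | c u = n ∧ ∀ x ∈ greedyIndep n, ¬ G.Adj u x}

lemma greedyIndep_subset (n : ℕ) : greedyIndep G M c n ⊆ M := by
  induction n with
  | zero => exact empty_subset M
  | succ n ih => exact union_subset ih (filter_subset _ M)

lemma greedyIndep_mono : Monotone (greedyIndep G M c) :=
  monotone_nat_of_le_succ fun _ => subset_union_left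

lemma lt_of_mem_greedyIndep {n : ℕ} {x : V} (hx : x ∈ greedyIndep G M c n) : c x < n := by
  induction n with
  | zero => simp [greedyIndep] at hx
  | succ n ih =>
    rcases mem_union.mp hx with hx | hx
    · exact (ih hx).trans n.lt_succ_self
    · exact ((mem_filter.mp hx).2.1).trans_lt n.lt_succ_self

variable {c}

lemma greedyIndep_pairwise_not_adj (hc : ∀ u v, G.Adj u v → c u ≠ c v) (n : ℕ) :
    ∀ x ∈ greedyIndep G M c n, ∀ y ∈ greedyIndep G M c n, ¬ G.Adj x y := by
  induction n with
  | zero => simp [greedyIndep]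
  | succ n ih =>
    intro x hx y hy hxy
    simp only [greedyIndep, mem_union, mem_filter] at hx hy
    rcases hx with hx | ⟨-, hcx, hx⟩ <;> rcases hy with hy | ⟨-, hcy, hy⟩
    · exact ih x hx y hy hxy
    · exact hy x hx hxy.symm
    · exact hx y hy hxy
    · exact hc x y hxy (hcx.trans hcy.symm)

lemma mem_greedyIndep_or_exists_adj {n : ℕ} {u : V} (hu : u ∈ M) (hun : c u < n) :
    u ∈ greedyIndep G M c n ∨ ∃ x ∈ greedyIndep G M c n, G.Adj u x := by
  have hmono := greedyIndep_mono G M c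
  by_cases h : ∃ x ∈ greedyIndep G M c (c u), G.Adj u x
  · obtain ⟨x, hx, hux⟩ := h
    exact .inr ⟨x, hmono hun.le hx, hux⟩
  · exact .inl (hmono hun (mem_union_right _
      (mem_filter.mpr ⟨hu, rfl, fun x hx hux => h ⟨x, hx, hux⟩⟩)))

lemma mem_greedyIndep_of_lt_of_adj {n : ℕ} {u : V} (hu : u ∈ M) (hun : c u < n)
    (hfirst : ∀ v ∈ M, G.Adj u v → c u < c v) : u ∈ greedyIndep G M c n := by
  refine greedyIndep_mono G M c hun (mem_union_right _ (mem_filter.mpr ⟨hu, rfl, ?_⟩))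
  intro x hx hux
  exact (lt_asymm (lt_of_mem_greedyIndep G M c hx))
    (hfirst x (greedyIndep_subset G M c _ hx) hux)

end Greedy

def weight (d : ℕ) : ℕ := min (10 + 5 * d) (16 + 3 * d)

lemma weight_add_le (d e : ℕ) : weight d + 3 * e ≤ weight (d + e) := by
  unfold weight; omega

lemma weight_add_le_of_le_three {d e : ℕ} (h : d + e ≤ 3) (he : 1 ≤ e) :
    weight d + 3 * e + 2 ≤ weight (d + e) := by
  unfold weight; omega

lemma weight_le (d : ℕ) : weight d ≤ 16 + 3 * d := min_le_right _ _

lemma le_sum_gain_of_card_mul_le {d N : ℕ} (hN : 24 ≤ (min d 3 + 1) * N) (hN24 : N ≤ 24) :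
    240 ≤ N * (weight d + 3 * d) + (24 - N) * (if d ≤ 3 then 2 else 0) := by
  unfold weight
  by_cases hd : d ≤ 3
  · interval_cases d <;> simp at hN ⊢ <;> omega
  · have h6 : 6 ≤ N := by rw [min_eq_right (by omega)] at hN; omega
    rw [if_neg hd, min_eq_right (by omega)]
    nlinarith

section Potential

variable {V : Type*} (G : SimpleGraph V) [DecidableRel G.Adj]

def degIn (S : Finset V) (v : V) : ℕ := #{w ∈ S | G.Adj v w}

def potential (S : Finset V) : ℕ := ∑ v ∈ S, weight (degIn G S v)

lemma potential_univ_le [Fintype V] :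
    potential G univ ≤ 16 * Fintype.card V + 6 * #G.edgeFinset := by
  calc potential G univ ≤ ∑ v, (16 + 3 * G.degree v) := sum_le_sum fun v _ => by
        simpa [degIn, ← G.neighborFinset_eq_filter] using weight_le _
    _ = 16 * Fintype.card V + 6 * #G.edgeFinset := by
        rw [sum_add_distrib, ← mul_sum, G.sum_degrees_eq_twice_card_edges]
        simp; ring

variable [DecidableEq V]

/-- A lower bound on a marked vertex `u`'s share of the potential drop when `X` is coloured. -/
def gain (S X : Finset V) (u : V) : ℕ :=
  if u ∈ X then weight (degIn G S u) + 3 * degIn G S u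
  else if degIn G S u ≤ 3 then 2 else 0

variable {G}

lemma degIn_eq_degIn_sdiff_add {S X : Finset V} (hXS : X ⊆ S) (v : V) :
    degIn G S v = degIn G (S \ X) v + #{x ∈ X | G.Adj v x} := by
  rw [degIn, degIn, ← card_union_of_disjoint (disjoint_filter_filter sdiff_disjoint),
    ← filter_union, sdiff_union_of_subset hXS]

lemma sum_card_adj_sdiff_eq_sum_degIn {S X : Finset V} (hXS : X ⊆ S)
    (hX : ∀ x ∈ X, ∀ y ∈ X, ¬ G.Adj x y) :
    ∑ v ∈ S \ X, #{x ∈ X | G.Adj v x} = ∑ x ∈ X, degIn G S x := by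
  refine (sum_card_bipartiteAbove_eq_sum_card_bipartiteBelow G.Adj).trans
    (sum_congr rfl fun x hx => ?_)
  rw [degIn_eq_degIn_sdiff_add hXS, filter_eq_empty_iff.mpr (hX x hx), card_empty, add_zero,
    degIn]
  simp only [bipartiteBelow, G.adj_comm]

lemma weight_degIn_sdiff_add_le {S M X : Finset V} (hXS : X ⊆ S) {v : V} (hv : v ∉ X)
    (hcov : v ∈ M → ∃ x ∈ X, G.Adj v x) :
    weight (degIn G (S \ X) v) + 3 * #{x ∈ X | G.Adj v x}
      + (if v ∈ M then gain G S X v else 0) ≤ weight (degIn G S v) := by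
  have hslope := weight_add_le (degIn G (S \ X) v) #{x ∈ X | G.Adj v x}
  rw [gain, if_neg hv, degIn_eq_degIn_sdiff_add hXS]
  split_ifs with hM hd
  · obtain ⟨x, hx, hvx⟩ := hcov hM
    exact weight_add_le_of_le_three hd (card_pos.mpr ⟨x, mem_filter.mpr ⟨hx, hvx⟩⟩)
  all_goals omega

lemma sum_gain_add_potential_sdiff_le {S M X : Finset V} (hMS : M ⊆ S) (hXM : X ⊆ M)
    (hX : ∀ x ∈ X, ∀ y ∈ X, ¬ G.Adj x y) (hcov : ∀ u ∈ M, u ∉ X → ∃ x ∈ X, G.Adj u x) :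
    ∑ u ∈ M, gain G S X u + potential G (S \ X) ≤ potential G S := by
  have hXS := hXM.trans hMS
  have hpt := sum_le_sum (s := S \ X) fun v hv =>
    weight_degIn_sdiff_add_le (M := M) hXS (mem_sdiff.mp hv).2 fun hvM =>
      hcov v hvM (mem_sdiff.mp hv).2
  have hMX : (S \ X) ∩ M = M \ X := by
    ext v; simp only [mem_inter, mem_sdiff]; constructor
    · exact fun h => ⟨h.2, h.1.2⟩
    · exact fun h => ⟨⟨hMS h.1, h.2⟩, h.1⟩
  rw [sum_add_distrib, sum_add_distrib, ← mul_sum, sum_card_adj_sdiff_eq_sum_degIn hXS hX,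
    sum_ite_mem, hMX] at hpt
  have hgainX : ∑ x ∈ X, gain G S X x
      = ∑ x ∈ X, weight (degIn G S x) + 3 * ∑ x ∈ X, degIn G S x := by
    rw [mul_sum, ← sum_add_distrib]
    exact sum_congr rfl fun x hx => if_pos hx
  rw [potential, potential, ← sum_sdiff hXM, ← sum_sdiff hXS, hgainX]
  omega

end Potential

section Painter

variable {V : Type*} [DecidableEq V] {G : SimpleGraph V} [DecidableRel G.Adj]
  (co : G.Coloring (Fin 4)) (M : Finset V)

/-- Painter's answer to `M`: the greedy independent subset, colour classes taken in the order
`σ⁻¹ 0, …, σ⁻¹ 3`. -/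
abbrev painterMove (σ : Perm (Fin 4)) : Finset V :=
  greedyIndep G M (fun v => σ (co v)) 4

lemma painterMove_pairwise_not_adj (σ : Perm (Fin 4)) :
    ∀ x ∈ painterMove co M σ, ∀ y ∈ painterMove co M σ, ¬ G.Adj x y :=
  greedyIndep_pairwise_not_adj G M
    (fun _ _ h => Fin.val_injective.ne (σ.injective.ne (co.valid h))) 4

lemma mem_painterMove_or_exists_adj (σ : Perm (Fin 4)) {u : V} (hu : u ∈ M) :
    u ∈ painterMove co M σ ∨ ∃ x ∈ painterMove co M σ, G.Adj u x :=
  mem_greedyIndep_or_exists_adj G M hu (σ (co u)).isLt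

lemma le_sum_gain_painterMove {S : Finset V} (hMS : M ⊆ S) {u : V} (hu : u ∈ M) :
    240 ≤ ∑ σ : Perm (Fin 4), gain G S (painterMove co M σ) u := by
  set d := degIn G S u
  set D := image co {v ∈ M | G.Adj u v}
  have huD : co u ∉ D := by
    simp only [D, mem_image, not_exists, not_and]
    exact fun v hv hcv => co.valid (mem_filter.mp hv).2 hcv.symm
  have hDd : #D ≤ min d 3 := by
    have h4 := card_lt_univ_of_notMem huD
    have hd : #D ≤ d := card_image_le.trans (card_le_card (filter_subset_filter _ hMS))
    simp only [Fintype.card_fin] at h4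
    omega
  set N := #{σ : Perm (Fin 4) | u ∈ painterMove co M σ}
  have hN : 24 ≤ (min d 3 + 1) * N := by
    calc 24 = (Fintype.card (Fin 4)).factorial := by simp [Nat.factorial]
      _ = (#D + 1) * #{σ : Perm (Fin 4) | ∀ b ∈ D, σ (co u) < σ b} := by
          convert (card_add_one_mul_card_filter_perm_lt huD).symm
      _ ≤ (min d 3 + 1) * N := by
        refine Nat.mul_le_mul (by omega) (card_le_card fun σ hσ => ?_)
        rw [mem_filter] at hσ ⊢
        exact ⟨hσ.1, mem_greedyIndep_of_lt_of_adj G M (c := fun v => σ (co v)) hu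
          (σ (co u)).isLt fun v hv huv =>
            hσ.2 (co v) (mem_image_of_mem co (mem_filter.mpr ⟨hv, huv⟩))⟩
  have hN24 : N ≤ 24 := card_filter_le _ _
  have hcompl : #{σ : Perm (Fin 4) | u ∉ painterMove co M σ} = 24 - N := by
    have := card_filter_add_card_filter_not (s := (univ : Finset (Perm (Fin 4))))
      (fun σ => u ∈ painterMove co M σ)
    rw [card_univ, Fintype.card_perm, Fintype.card_fin,
      show (4 : ℕ).factorial = 24 from rfl] at this
    omega
  calc 240 ≤ N * (weight d + 3 * d) + (24 - N) * (if d ≤ 3 then 2 else 0) :=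
        le_sum_gain_of_card_mul_le hN hN24
    _ = ∑ σ : Perm (Fin 4), gain G S (painterMove co M σ) u := by
        simp only [gain]
        rw [sum_ite, sum_const, sum_const, hcompl, smul_eq_mul, smul_eq_mul]

end Painter

section Game

variable {V : Type*} [DecidableEq V] {G : SimpleGraph V} [DecidableRel G.Adj]

lemma exists_indep_ten_mul_card_add_potential_le (hcol : G.Colorable 4) {S M : Finset V}
    (hMS : M ⊆ S) (hM : M.Nonempty) :
    ∃ X ⊆ M, X.Nonempty ∧ (∀ x ∈ X, ∀ y ∈ X, ¬ G.Adj x y) ∧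
      10 * #M + potential G (S \ X) ≤ potential G S := by
  obtain ⟨co⟩ := hcol
  obtain ⟨σ, -, hσ⟩ : ∃ σ ∈ (univ : Finset (Perm (Fin 4))),
      10 * #M ≤ ∑ u ∈ M, gain G S (painterMove co M σ) u := by
    refine exists_le_of_sum_le univ_nonempty ?_
    rw [sum_comm]
    calc ∑ _σ : Perm (Fin 4), 10 * #M = ∑ _u ∈ M, 240 := by
          simp [Fintype.card_perm, Nat.factorial]; ring
      _ ≤ _ := sum_le_sum fun u hu => le_sum_gain_painterMove co M hMS hu
  have hcov := fun u (hu : u ∈ M) => mem_painterMove_or_exists_adj co M σ hu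
  have hXM : painterMove co M σ ⊆ M := greedyIndep_subset G M _ 4
  refine ⟨painterMove co M σ, hXM, ?_, painterMove_pairwise_not_adj co M σ, ?_⟩
  · obtain ⟨u, hu⟩ := hM
    rcases hcov u hu with h | ⟨x, hx, -⟩
    exacts [⟨u, h⟩, ⟨x, hx⟩]
  · have := sum_gain_add_potential_sdiff_le hMS hXM (painterMove_pairwise_not_adj co M σ)
      fun u hu hux => (hcov u hu).resolve_left hux
    omega

lemma ten_mul_slowAux_le_potential (hcol : G.Colorable 4) (n : ℕ) :
    ∀ S : Finset V, #S ≤ n → 10 * slowAux G n S ≤ potential G S := by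
  induction n with
  | zero => simp [slowAux]
  | succ n ih =>
    intro S hS
    rw [slowAux, mul_comm, ← Nat.le_div_iff_mul_le (by norm_num)]
    refine Finset.sup_le fun M hM => ?_
    rw [Nat.le_div_iff_mul_le (by norm_num)]
    obtain ⟨hMS, hMne⟩ := mem_filter.mp hM
    obtain ⟨X, hXM, hXne, hX, hdrop⟩ :=
      exists_indep_ten_mul_card_add_potential_le hcol (mem_powerset.mp hMS) hMne
    have hcard : #(S \ X) ≤ n := by
      rw [card_sdiff_of_subset (hXM.trans (mem_powerset.mp hMS))]
      have := hXne.card_pos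
      omega
    have := ih (S \ X) hcard
    calc (#M + sInf _) * 10 ≤ (#M + slowAux G n (S \ X)) * 10 := by
          gcongr; exact Nat.sInf_le ⟨X, hXM, hXne, hX, rfl⟩
      _ ≤ potential G S := by omega

end Game

end SlowColoring

theorem stmt_13 {V : Type*} [Fintype V] [DecidableEq V] (G : SimpleGraph V)
    [DecidableRel G.Adj] (hcol : G.Colorable 4) :
    (slowCost G Finset.univ : ℝ) ≤
      (8 * (Fintype.card V : ℝ) + 3 * (G.edgeFinset.card : ℝ)) / 5 := by
  have h : 10 * slowCost G univ ≤ 16 * Fintype.card V + 6 * #G.edgeFinset :=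
    (SlowColoring.ten_mul_slowAux_le_potential hcol _ univ le_rfl).trans
      (SlowColoring.potential_univ_le G)
  have h' : (10 * slowCost G univ : ℝ) ≤ 16 * Fintype.card V + 6 * #G.edgeFinset := by
    exact_mod_cast h
  linarith
end

section
/- If G is a 4-colorable finite simple graph (chromatic number at most 4), then the sum-color cost satisfies ŝ(G) ≤ Φ(G), where Φ(G) = Σ_{v ∈ V(G)} ( 1 + (1/5)·min(d_G(v), 3) ) + (3/5)·|E(G)| and d_G(v) denotes the degree of v in G. -/
/-!
Ten times `Φ` is a natural-number potential of the uncolored graph. It suffices that every marked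
set `M` contains an independent set `X` whose removal lowers the potential by at least `10 |M|`;
induction over the game then gives `10 ŝ ≤ 10 Φ`. Removing `X` lowers the potential by at least
a sum of local gains `g(x)`, `x ∈ X`. While some `x ∈ M` has `g(x) ≥ 10 (1 + d_M(x))`, take it and
discard its closed neighbourhood. Otherwise every low vertex (degree at most `3`) has at most two
low neighbours in `M`. For each class of a proper 4-coloring, the high vertices of that class,
together with a weighted Caro–Wei independent set among the low vertices with no neighbour in the
class, form a candidate; averaging over the four classes shows that one of them works.
-/

open Finset

lemma mul_six_div_succ {d : ℕ} (hd : d ≤ 2) : d * (6 / (d + 1)) = 6 - 6 / (d + 1) := by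
  interval_cases d <;> rfl

/-- A vertex with `l ≤ 2` low and `h` high neighbours is free in at least `4 - h` of the four
color classes, and receives `12 h` from its high neighbours. -/
lemma two_hundred_forty_le {l h : ℕ} (hl : l ≤ 2) (hlh : l + h ≤ 3) :
    240 ≤ 12 * h + (4 - h) * (60 + 6 / (l + 1) * (8 * h)) := by
  have : h ≤ 3 := by omega
  interval_cases l <;> interval_cases h <;> omega

lemma sum_mul_le_sum_sum_filter_notMem_image {α ι : Type*} [Fintype ι] [DecidableEq ι]
    (c : α → ι) (L : Finset α) (B : α → Finset α) (f : α → ℕ) :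
    ∑ y ∈ L, (Fintype.card ι - #(B y)) * f y ≤
      ∑ i, ∑ y ∈ L with i ∉ (B y).image c, f y := by
  simp_rw [sum_filter]
  rw [sum_comm]
  gcongr with y
  rw [← sum_filter, sum_const, smul_eq_mul, filter_notMem_eq_sdiff, card_univ_sdiff]
  exact Nat.mul_le_mul_right _ (Nat.sub_le_sub_left card_image_le _)

namespace SimpleGraph

lemma isIndepSet_union_of_not_adj {V : Type*} [DecidableEq V] {G : SimpleGraph V}
    {X Y : Finset V} (hX : G.IsIndepSet X) (hY : G.IsIndepSet Y)
    (hXY : ∀ x ∈ X, ∀ y ∈ Y, ¬ G.Adj x y) : G.IsIndepSet (X ∪ Y : Finset V) := by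
  rw [IsIndepSet, coe_union, Set.pairwise_union]
  exact ⟨hX, hY, fun x hx y hy _ => ⟨hXY x hx y hy, fun h => hXY x hx y hy h.symm⟩⟩

variable {V : Type*} (G : SimpleGraph V) [DecidableRel G.Adj]

def degIn (S : Finset V) (v : V) : ℕ := #{u ∈ S | G.Adj v u}

def lowNbrs (S M : Finset V) (v : V) : Finset V := {u ∈ M | G.Adj v u ∧ G.degIn S u ≤ 3}

def highNbrs (S M : Finset V) (v : V) : Finset V := {u ∈ M | G.Adj v u ∧ 3 < G.degIn S u}

def potentialWeight (d : ℕ) : ℕ := 10 + 2 * min d 3 + 3 * d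

/-- Ten times the bound `Φ(G[S])` of the theorem, by the handshake lemma. -/
def potential (S : Finset V) : ℕ := ∑ v ∈ S, potentialWeight (G.degIn S v)

/-- Coloring `v` removes its own weight, lowers the weight of each neighbour by `3`, and by `2`
more for each neighbour of degree at most `3`. -/
def colorGain (S : Finset V) (v : V) : ℕ :=
  potentialWeight (G.degIn S v) + 3 * G.degIn S v + 2 * #(G.lowNbrs S S v)

/-- Six times the lower bound `10 + 8 h / (l + 1)` that the weighted Caro–Wei bound gives, per
vertex of degree at most `3` with `l` low and `h` high neighbours, for the gain of an independent
set among such vertices. -/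
def lowShare (S M : Finset V) (y : V) : ℕ :=
  60 + 6 / (#(G.lowNbrs S M y) + 1) * (8 * #(G.highNbrs S M y))

lemma degIn_mono {S T : Finset V} (h : S ⊆ T) (v : V) : G.degIn S v ≤ G.degIn T v :=
  card_le_card (filter_subset_filter _ h)

lemma lowNbrs_mono (S : Finset V) {M N : Finset V} (h : M ⊆ N) (v : V) :
    G.lowNbrs S M v ⊆ G.lowNbrs S N v :=
  filter_subset_filter _ h

lemma card_lowNbrs_add_card_highNbrs (S M : Finset V) (v : V) :
    #(G.lowNbrs S M v) + #(G.highNbrs S M v) = G.degIn M v := by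
  rw [degIn, ← card_filter_add_card_filter_not (s := {u ∈ M | G.Adj v u})
    (fun u => G.degIn S u ≤ 3)]
  simp only [lowNbrs, highNbrs, filter_filter, not_le]

lemma card_lowNbrs_le_degIn (S M : Finset V) (v : V) : #(G.lowNbrs S M v) ≤ G.degIn M v :=
  G.card_lowNbrs_add_card_highNbrs S M v ▸ Nat.le_add_right _ _

lemma sum_card_lowNbrs_eq_sum_card_highNbrs (S M : Finset V) :
    ∑ x ∈ M with 3 < G.degIn S x, #(G.lowNbrs S M x) =
      ∑ y ∈ M with G.degIn S y ≤ 3, #(G.highNbrs S M y) := by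
  convert sum_card_bipartiteAbove_eq_sum_card_bipartiteBelow G.Adj
    (s := {x ∈ M | 3 < G.degIn S x}) (t := {y ∈ M | G.degIn S y ≤ 3}) using 2 with x _ y _
  · simp only [lowNbrs, bipartiteAbove, filter_filter, and_comm]
  · simp only [highNbrs, bipartiteBelow, filter_filter, and_comm, G.adj_comm y]

lemma sum_sum_filter_adj (T : Finset V) (f : V → ℕ) :
    ∑ v ∈ T, ∑ u ∈ T with G.Adj v u, f u = ∑ u ∈ T, G.degIn T u * f u := by
  refine (sum_sum_bipartiteAbove_eq_sum_sum_bipartiteBelow G.Adj (s := T) (t := T)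
    fun _ u => f u).trans (sum_congr rfl fun u _ => ?_)
  simp only [sum_const, smul_eq_mul, degIn, bipartiteBelow, G.adj_comm u]

theorem potential_univ [Fintype V] :
    (G.potential univ : ℝ) = 10 * (∑ v, (1 + (1 / 5 : ℝ) * (min (G.degree v) 3 : ℕ)) +
      (3 / 5 : ℝ) * #G.edgeFinset) := by
  have hdeg : ∀ v, G.degIn univ v = G.degree v := fun v => by
    rw [degIn, ← card_neighborFinset_eq_degree, neighborFinset_eq_filter]
  simp only [potential, potentialWeight, hdeg, sum_add_distrib, ← mul_sum,
    G.sum_degrees_eq_twice_card_edges]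
  push_cast
  simp only [sum_const, nsmul_eq_mul]
  ring

section ColorGain

variable {G} {S M : Finset V} {y : V}

lemma le_colorGain_of_degIn_le_three (hMS : M ⊆ S) (hy : G.degIn S y ≤ 3) :
    10 + 10 * #(G.lowNbrs S M y) + 8 * #(G.highNbrs S M y) ≤ G.colorGain S y := by
  have := G.card_lowNbrs_add_card_highNbrs S M y
  have := G.degIn_mono hMS y
  have := card_le_card (G.lowNbrs_mono S hMS y)
  rw [colorGain, potentialWeight, min_eq_left hy]
  omega

lemma le_colorGain_of_three_lt_degIn (hMS : M ⊆ S) (hy : 3 < G.degIn S y) :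
    40 + 2 * #(G.lowNbrs S M y) ≤ G.colorGain S y := by
  have := card_le_card (G.lowNbrs_mono S hMS y)
  rw [colorGain, potentialWeight, min_eq_right hy.le]
  omega

lemma card_lowNbrs_le_two_of_colorGain_lt (hMS : M ⊆ S) (hy : G.degIn S y ≤ 3)
    (hgain : G.colorGain S y < 10 * (1 + G.degIn M y)) : #(G.lowNbrs S M y) ≤ 2 := by
  have := card_le_card (G.lowNbrs_mono S hMS y)
  have := G.card_lowNbrs_le_degIn S S y
  have := G.degIn_mono hMS y
  rw [colorGain, potentialWeight, min_eq_left hy] at hgain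
  omega

lemma sum_colorGain_ge_of_three_lt_degIn (hMS : M ⊆ S) :
    40 * #{x ∈ M | 3 < G.degIn S x} +
      2 * ∑ y ∈ M with G.degIn S y ≤ 3, #(G.highNbrs S M y) ≤
      ∑ x ∈ M with 3 < G.degIn S x, G.colorGain S x := by
  have : ∑ x ∈ M with 3 < G.degIn S x, (40 + 2 * #(G.lowNbrs S M x)) ≤
      ∑ x ∈ M with 3 < G.degIn S x, G.colorGain S x :=
    sum_le_sum fun x hx => le_colorGain_of_three_lt_degIn hMS (mem_filter.1 hx).2
  rwa [sum_add_distrib, sum_const, smul_eq_mul, ← mul_sum, mul_comm,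
    G.sum_card_lowNbrs_eq_sum_card_highNbrs] at this

lemma card_mul_le_sum_lowShare (hMS : M ⊆ S)
    (hlow : ∀ y ∈ M, G.degIn S y ≤ 3 → #(G.lowNbrs S M y) ≤ 2) :
    240 * #{y ∈ M | G.degIn S y ≤ 3} ≤
      12 * ∑ y ∈ M with G.degIn S y ≤ 3, #(G.highNbrs S M y) +
      ∑ y ∈ M with G.degIn S y ≤ 3, (4 - #(G.highNbrs S M y)) * G.lowShare S M y := by
  rw [mul_sum, ← sum_add_distrib, mul_comm, ← smul_eq_mul, ← sum_const]
  refine sum_le_sum fun y hy => ?_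
  obtain ⟨hyM, hy⟩ := mem_filter.1 hy
  have := G.card_lowNbrs_add_card_highNbrs S M y
  have := G.degIn_mono hMS y
  exact two_hundred_forty_le (hlow y hyM hy) (by omega)

lemma degIn_le_card_lowNbrs {T : Finset V}
    (hT : T ⊆ ({y ∈ M | G.degIn S y ≤ 3} : Finset V)) (y : V) :
    G.degIn T y ≤ #(G.lowNbrs S M y) :=
  card_le_card fun u hu => by
    obtain ⟨huT, hyu⟩ := mem_filter.1 hu
    obtain ⟨huM, hu⟩ := mem_filter.1 (hT huT)
    exact mem_filter.2 ⟨huM, hyu, hu⟩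

end ColorGain

variable [DecidableEq V]

lemma degIn_sdiff_add {S X : Finset V} (hXS : X ⊆ S) (v : V) :
    G.degIn (S \ X) v + #{x ∈ X | G.Adj v x} = G.degIn S v := by
  have : {u ∈ S \ X | G.Adj v u} = {u ∈ S | G.Adj v u} \ {x ∈ X | G.Adj v x} := by
    ext; simp only [mem_filter, mem_sdiff]; tauto
  rw [degIn, degIn, this, card_sdiff_add_card_eq_card (filter_subset_filter _ hXS)]

lemma potentialWeight_sdiff_add_le {S X : Finset V} (hXS : X ⊆ S) (v : V) :
    potentialWeight (G.degIn (S \ X) v) + 3 * #{x ∈ X | G.Adj v x} +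
      2 * #{x ∈ X | G.Adj v x ∧ G.degIn S v ≤ 3} ≤ potentialWeight (G.degIn S v) := by
  have hd := G.degIn_sdiff_add hXS v
  have hmin := min_le_right (G.degIn (S \ X) v) 3
  simp only [potentialWeight]
  by_cases hv : G.degIn S v ≤ 3
  · simp only [hv, and_true]
    rw [min_eq_left hv, min_eq_left (by omega)]
    omega
  · simp only [hv, and_false, filter_false, card_empty]
    rw [min_eq_right (show 3 ≤ G.degIn S v by omega)]
    omega

def closedNbhdIn (T : Finset V) (v : V) : Finset V := insert v {u ∈ T | G.Adj v u}

lemma sum_closedNbhdIn {β : Type*} [AddCommMonoid β] (T : Finset V) (v : V) (f : V → β) :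
    ∑ u ∈ G.closedNbhdIn T v, f u = f v + ∑ u ∈ T with G.Adj v u, f u :=
  sum_insert fun h => G.loopless.irrefl v (mem_filter.1 h).2

lemma closedNbhdIn_subset {T : Finset V} {v : V} (hv : v ∈ T) : G.closedNbhdIn T v ⊆ T :=
  insert_subset hv (filter_subset _ _)

lemma card_sdiff_closedNbhdIn_add {T : Finset V} {v : V} (hv : v ∈ T) :
    #(T \ G.closedNbhdIn T v) + (1 + G.degIn T v) = #T := by
  rw [← card_sdiff_add_card_eq_card (G.closedNbhdIn_subset hv),
    card_eq_sum_ones (G.closedNbhdIn T v), sum_closedNbhdIn, ← card_eq_sum_ones, degIn]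

variable {G} {S M : Finset V}

lemma sum_card_filter_adj_sdiff_eq {X : Finset V} (hX : G.IsIndepSet X)
    (p : V → Prop) [DecidablePred p] :
    ∑ v ∈ S \ X, #{x ∈ X | G.Adj v x ∧ p v} =
      ∑ x ∈ X, #{u ∈ S | G.Adj x u ∧ p u} := by
  refine (sum_card_bipartiteAbove_eq_sum_card_bipartiteBelow (fun v x => G.Adj v x ∧ p v)
    (s := S \ X) (t := X)).trans (sum_congr rfl fun x hx => congrArg card ?_)
  ext u
  simp only [mem_bipartiteBelow, mem_sdiff, mem_filter, G.adj_comm u x]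
  exact ⟨fun ⟨⟨hu, _⟩, h⟩ => ⟨hu, h⟩,
    fun ⟨hu, h⟩ => ⟨⟨hu, fun huX => hX hx huX (G.ne_of_adj h.1) h.1⟩, h⟩⟩

lemma potential_sdiff_add_sum_colorGain_le {X : Finset V} (hXS : X ⊆ S)
    (hX : G.IsIndepSet X) :
    G.potential (S \ X) + ∑ x ∈ X, G.colorGain S x ≤ G.potential S := by
  have hsum := sum_le_sum fun v (_ : v ∈ S \ X) => G.potentialWeight_sdiff_add_le hXS v
  have hdeg : ∑ v ∈ S \ X, #{x ∈ X | G.Adj v x} = ∑ x ∈ X, G.degIn S x := by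
    simpa [degIn] using sum_card_filter_adj_sdiff_eq (S := S) hX fun _ => True
  have hlow : ∑ v ∈ S \ X, #{x ∈ X | G.Adj v x ∧ G.degIn S v ≤ 3} =
      ∑ x ∈ X, #(G.lowNbrs S S x) :=
    sum_card_filter_adj_sdiff_eq hX _
  rw [sum_add_distrib, sum_add_distrib, ← mul_sum, ← mul_sum, hdeg, hlow] at hsum
  rw [potential, potential, ← sum_sdiff hXS]
  simp only [colorGain, sum_add_distrib, ← mul_sum]
  omega

lemma notMem_of_subset_sdiff_closedNbhdIn {T Y : Finset V} {v : V}
    (hY : Y ⊆ T \ G.closedNbhdIn T v) : v ∉ Y :=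
  fun h => (mem_sdiff.1 (hY h)).2 (mem_insert_self _ _)

lemma IsIndepSet.insert_of_subset_sdiff_closedNbhdIn {T Y : Finset V} {v : V}
    (hY : G.IsIndepSet Y) (hYT : Y ⊆ T \ G.closedNbhdIn T v) :
    G.IsIndepSet (insert v Y : Finset V) := by
  rw [coe_insert]
  refine hY.insert fun u hu _ => ?_
  have hu' := mem_sdiff.1 (hYT hu)
  have hvu : ¬ G.Adj v u := fun h => hu'.2 (mem_insert_of_mem (mem_filter.2 ⟨hu'.1, h⟩))
  exact ⟨hvu, fun h => hvu h.symm⟩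

/-- A weighted Caro–Wei bound for graphs of maximum degree `2`, where `6 / (d + 1)` is exact. -/
theorem exists_isIndepSet_sum_le_of_degIn_le_two (a : ℕ) (w : V → ℕ) (T : Finset V)
    (hT : ∀ y ∈ T, G.degIn T y ≤ 2) :
    ∃ Y ⊆ T, G.IsIndepSet Y ∧ ∑ y ∈ T, (6 * a + 6 / (G.degIn T y + 1) * w y) ≤
      6 * ∑ y ∈ Y, (a * (1 + G.degIn T y) + w y) := by
  induction T using Finset.strongInduction with
  | H T ih =>
  rcases T.eq_empty_or_nonempty with rfl | hne
  · exact ⟨∅, empty_subset _, by simp, by simp⟩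
  set c : V → ℕ := fun y => 6 / (G.degIn T y + 1)
  have hcount :
      ∑ v ∈ T, ∑ u ∈ T with G.Adj v u, c u * w u = ∑ v ∈ T, (6 - c v) * w v := by
    rw [sum_sum_filter_adj]
    exact sum_congr rfl fun u hu => by rw [← mul_assoc, mul_six_div_succ (hT u hu)]
  -- a vertex whose neighbours carry at most its own share of the weight
  obtain ⟨v, hvT, hv⟩ := exists_le_of_sum_le hne hcount.le
  set T' := T \ G.closedNbhdIn T v
  have hT'T : T' ⊂ T := sdiff_ssubset (G.closedNbhdIn_subset hvT) ⟨v, mem_insert_self _ _⟩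
  obtain ⟨Y, hYT', hY, hYsum⟩ := ih T' hT'T fun y hy =>
    (G.degIn_mono hT'T.subset y).trans (hT y (hT'T.subset hy))
  refine ⟨insert v Y, insert_subset hvT (hYT'.trans hT'T.subset),
    hY.insert_of_subset_sdiff_closedNbhdIn hYT', ?_⟩
  have hT' :
      ∑ y ∈ T', (6 * a + c y * w y) ≤ 6 * ∑ y ∈ Y, (a * (1 + G.degIn T y) + w y) := by
    refine le_trans ?_ (hYsum.trans ?_)
    · gcongr with y hy
      exact Nat.div_le_div_left (by simpa using G.degIn_mono hT'T.subset y) (by omega)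
    · gcongr with y
      exact G.degIn_mono hT'T.subset y
  have hN : ∑ y ∈ G.closedNbhdIn T v, (6 * a + c y * w y) ≤
      6 * (a * (1 + G.degIn T v) + w v) := by
    rw [sum_closedNbhdIn, sum_add_distrib, sum_const, smul_eq_mul]
    change _ + (G.degIn T v * (6 * a) + _) ≤ _
    have : (6 - c v) * w v + c v * w v = 6 * w v := by
      rw [← add_mul, Nat.sub_add_cancel (Nat.div_le_self _ _)]
    nlinarith
  calc ∑ y ∈ T, (6 * a + c y * w y)
      = ∑ y ∈ T', (6 * a + c y * w y) + ∑ y ∈ G.closedNbhdIn T v, (6 * a + c y * w y) :=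
        (sum_sdiff (G.closedNbhdIn_subset hvT)).symm
    _ ≤ 6 * ∑ y ∈ Y, (a * (1 + G.degIn T y) + w y) + 6 * (a * (1 + G.degIn T v) + w v) :=
        add_le_add hT' hN
    _ = 6 * ∑ y ∈ insert v Y, (a * (1 + G.degIn T y) + w y) := by
        rw [sum_insert (notMem_of_subset_sdiff_closedNbhdIn hYT')]
        ring

lemma exists_isIndepSet_sum_lowShare_le (hMS : M ⊆ S) {T : Finset V}
    (hT : T ⊆ ({y ∈ M | G.degIn S y ≤ 3} : Finset V))
    (hlow : ∀ y ∈ T, #(G.lowNbrs S M y) ≤ 2) :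
    ∃ Y ⊆ T, G.IsIndepSet Y ∧
      ∑ y ∈ T, G.lowShare S M y ≤ 6 * ∑ y ∈ Y, G.colorGain S y := by
  obtain ⟨Y, hYT, hY, hYsum⟩ := exists_isIndepSet_sum_le_of_degIn_le_two 10
    (fun y => 8 * #(G.highNbrs S M y)) T fun y hy => (degIn_le_card_lowNbrs hT y).trans (hlow y hy)
  refine ⟨Y, hYT, hY, le_trans ?_ (hYsum.trans ?_)⟩
  · refine sum_le_sum fun y _ => ?_
    simp only [lowShare]
    gcongr
    exact degIn_le_card_lowNbrs hT y
  · gcongr with y hy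
    have := le_colorGain_of_degIn_le_three hMS (mem_filter.1 (hT (hYT hy))).2
    have := degIn_le_card_lowNbrs hT y
    omega

theorem exists_isIndepSet_of_card_lowNbrs_le_two (c : G.Coloring (Fin 4)) (hMS : M ⊆ S)
    (hlow : ∀ y ∈ M, G.degIn S y ≤ 3 → #(G.lowNbrs S M y) ≤ 2) :
    ∃ X ⊆ M, G.IsIndepSet X ∧ 10 * #M ≤ ∑ x ∈ X, G.colorGain S x := by
  set L := {y ∈ M | G.degIn S y ≤ 3}
  set H := {x ∈ M | 3 < G.degIn S x}
  set Z : Fin 4 → Finset V := fun i => {x ∈ H | c x = i}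
  set T : Fin 4 → Finset V := fun i => {y ∈ L | i ∉ (G.highNbrs S M y).image c}
  have hTL : ∀ i, T i ⊆ L := fun i => filter_subset _ _
  have hLM : L ⊆ M := filter_subset _ _
  choose Y hYT hY hYsum using fun i => exists_isIndepSet_sum_lowShare_le hMS (hTL i)
    fun y hy => hlow y (hLM (hTL i hy)) (mem_filter.1 (hTL i hy)).2
  have hZY : ∀ i, Disjoint (Z i) (Y i) := fun i => Finset.disjoint_left.2 fun x hxZ hxY => by
    have := (mem_filter.1 (hTL i (hYT i hxY))).2
    have := (mem_filter.1 (mem_filter.1 hxZ).1).2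
    omega
  have htotal : ∑ _i : Fin 4, 60 * #M ≤ ∑ i, 6 * ∑ x ∈ Z i ∪ Y i, G.colorGain S x := by
    have hZ : ∑ i, ∑ x ∈ Z i, G.colorGain S x = ∑ x ∈ H, G.colorGain S x :=
      sum_fiberwise _ _ _
    have hcount :=
      sum_mul_le_sum_sum_filter_notMem_image c L (G.highNbrs S M) (G.lowShare S M)
    have hYtotal := sum_le_sum fun i (_ : i ∈ univ) => hYsum i
    have hH : 40 * #H + 2 * ∑ y ∈ L, #(G.highNbrs S M y) ≤ ∑ x ∈ H, G.colorGain S x :=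
      sum_colorGain_ge_of_three_lt_degIn hMS
    have hL : 240 * #L ≤ 12 * ∑ y ∈ L, #(G.highNbrs S M y) +
        ∑ y ∈ L, (4 - #(G.highNbrs S M y)) * G.lowShare S M y :=
      card_mul_le_sum_lowShare hMS hlow
    have hLH : #L + #H = #M := by
      rw [← card_filter_add_card_filter_not (s := M) fun y => G.degIn S y ≤ 3]
      simp only [L, H, not_le]
    simp only [sum_union (hZY _), mul_add, sum_add_distrib, ← mul_sum, hZ]
    simp only [Fintype.card_fin, sum_const, card_univ, smul_eq_mul] at hcount ⊢
    rw [← mul_sum] at hYtotal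
    change _ ≤ ∑ i, ∑ y ∈ T i, _ at hcount
    omega
  obtain ⟨i, -, hi⟩ := exists_le_of_sum_le univ_nonempty htotal
  refine ⟨Z i ∪ Y i, union_subset ((filter_subset _ _).trans (filter_subset _ _))
    ((hYT i).trans ((hTL i).trans hLM)), ?_, by omega⟩
  refine isIndepSet_union_of_not_adj
    (fun x hx z hz _ hxz => c.valid hxz ((mem_filter.1 hx).2.trans (mem_filter.1 hz).2.symm))
    (hY i) fun z hz y hy h => ?_
  obtain ⟨hzH, hzi⟩ := mem_filter.1 hz
  exact (mem_filter.1 (hYT i hy)).2 <|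
    mem_image.2 ⟨z, mem_filter.2 ⟨(mem_filter.1 hzH).1, h.symm, (mem_filter.1 hzH).2⟩, hzi⟩

theorem exists_isIndepSet_ten_mul_card_le_sum_colorGain (c : G.Coloring (Fin 4))
    (hMS : M ⊆ S) :
    ∃ X ⊆ M, G.IsIndepSet X ∧ 10 * #M ≤ ∑ x ∈ X, G.colorGain S x := by
  induction M using Finset.strongInduction with
  | H M ih =>
  by_cases hgreedy : ∃ x ∈ M, 10 * (1 + G.degIn M x) ≤ G.colorGain S x
  · obtain ⟨x, hxM, hx⟩ := hgreedy
    have hM' : M \ G.closedNbhdIn M x ⊂ M :=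
      sdiff_ssubset (G.closedNbhdIn_subset hxM) ⟨x, mem_insert_self _ _⟩
    obtain ⟨X, hXM', hX, hXsum⟩ := ih _ hM' (hM'.subset.trans hMS)
    refine ⟨insert x X, insert_subset hxM (hXM'.trans hM'.subset),
      hX.insert_of_subset_sdiff_closedNbhdIn hXM', ?_⟩
    rw [sum_insert (notMem_of_subset_sdiff_closedNbhdIn hXM')]
    have := G.card_sdiff_closedNbhdIn_add hxM
    omega
  · push Not at hgreedy
    exact exists_isIndepSet_of_card_lowNbrs_le_two c hMS fun y hyM hy =>
      card_lowNbrs_le_two_of_colorGain_lt hMS hy (hgreedy y hyM)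

theorem ten_mul_slowAux_le_potential (c : G.Coloring (Fin 4)) (n : ℕ) (S : Finset V)
    (hS : #S ≤ n) : 10 * slowAux G n S ≤ G.potential S := by
  induction n generalizing S with
  | zero => simp [slowAux]
  | succ n ih =>
  rw [slowAux, mul_comm, ← Nat.le_div_iff_mul_le (by norm_num)]
  refine Finset.sup_le fun M hM => ?_
  obtain ⟨hMS, hMne⟩ := mem_filter.1 hM
  rw [mem_powerset] at hMS
  rw [Nat.le_div_iff_mul_le (by norm_num)]
  obtain ⟨X, hXM, hX, hXsum⟩ := exists_isIndepSet_ten_mul_card_le_sum_colorGain c hMS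
  have hXne : X.Nonempty := by
    have := hMne.card_pos
    exact nonempty_of_sum_ne_zero (f := G.colorGain S) (by omega)
  have hXS := hXM.trans hMS
  have hinf : sInf {k : ℕ | ∃ X' : Finset V, X' ⊆ M ∧ X'.Nonempty ∧
      (∀ x ∈ X', ∀ y ∈ X', ¬ G.Adj x y) ∧ k = slowAux G n (S \ X')} ≤
      slowAux G n (S \ X) :=
    Nat.sInf_le ⟨X, hXM, hXne, fun x hx y hy h => hX hx hy (G.ne_of_adj h) h, rfl⟩
  have hrec := ih (S \ X) (by have := card_lt_card (sdiff_ssubset hXS hXne); omega)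
  have hdrop := potential_sdiff_add_sum_colorGain_le hXS hX
  omega

end SimpleGraph

theorem stmt_14 {V : Type*} [Fintype V] [DecidableEq V] (G : SimpleGraph V)
    [DecidableRel G.Adj] (hcol : G.Colorable 4) :
    (slowCost G Finset.univ : ℝ) ≤
      (∑ v : V, (1 + (1 / 5 : ℝ) * (min (G.degree v) 3 : ℕ))) +
        (3 / 5 : ℝ) * (G.edgeFinset.card : ℝ) := by
  obtain ⟨c⟩ := hcol
  have h : (10 : ℝ) * slowCost G univ ≤ G.potential univ := by
    exact_mod_cast G.ten_mul_slowAux_le_potential c _ univ le_rfl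
  rw [G.potential_univ] at h
  linarith
end

section
/- Let G be a finite simple graph with vertex set V, and let Φ be a real-valued function on subsets of V with Φ(∅) = 0. Suppose that for every S ⊆ V and every nonempty M ⊆ S there exists a set X ⊆ M that is independent in G and satisfies |M| ≤ Φ(S) − Φ(S∖X). Then ŝ(G[S]) ≤ Φ(S) for every S ⊆ V; in particular, the sum-color cost satisfies ŝ(G) ≤ Φ(V). -/
open Finset

/-! Painter answers each marked set `M ⊆ S` with the independent set `X ⊆ M` supplied by the
hypothesis, so every round's score `|M|` is paid for by the drop `Φ S - Φ (S \ X)` of the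
potential; telescoping down to `Φ ∅ = 0` bounds the total score by `Φ S`. -/

namespace SimpleGraph

variable {V : Type*} [DecidableEq V] (G : SimpleGraph V)

@[simp]
lemma slowAux_empty (n : ℕ) : slowAux G n ∅ = 0 := by
  cases n <;> simp [slowAux]

/-- Lister's optimal first mark `M`: every legal answer `X` of Painter to it bounds the value. -/
lemma exists_slowAux_succ_le {S : Finset V} (hS : S.Nonempty) (n : ℕ) :
    ∃ M ⊆ S, M.Nonempty ∧ ∀ X ⊆ M, X.Nonempty → (∀ x ∈ X, ∀ y ∈ X, ¬ G.Adj x y) →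
      slowAux G (n + 1) S ≤ M.card + slowAux G n (S \ X) := by
  have hF : (S.powerset.filter fun M => M.Nonempty).Nonempty :=
    ⟨S, mem_filter.mpr ⟨mem_powerset_self S, hS⟩⟩
  obtain ⟨M, hMF, hsup⟩ := exists_mem_eq_sup _ hF fun M => M.card +
    sInf {k : ℕ | ∃ X : Finset V, X ⊆ M ∧ X.Nonempty ∧
      (∀ x ∈ X, ∀ y ∈ X, ¬ G.Adj x y) ∧ k = slowAux G n (S \ X)}
  obtain ⟨hMS, hM⟩ := mem_filter.mp hMF
  refine ⟨M, mem_powerset.mp hMS, hM, fun X hXM hX hind => ?_⟩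
  rw [slowAux, hsup]
  gcongr
  exact Nat.sInf_le ⟨X, hXM, hX, hind, rfl⟩

lemma slowAux_le_of_potential (Φ : Finset V → ℝ) (hempty : Φ ∅ = 0)
    (hstep : ∀ S : Finset V, ∀ M ⊆ S, M.Nonempty →
      ∃ X ⊆ M, (∀ x ∈ X, ∀ y ∈ X, ¬ G.Adj x y) ∧
        (M.card : ℝ) ≤ Φ S - Φ (S \ X)) :
    ∀ n (S : Finset V), S.card ≤ n → (slowAux G n S : ℝ) ≤ Φ S := by
  intro n
  induction n with
  | zero =>
    intro S hS
    simp [card_eq_zero.mp (Nat.le_zero.mp hS), hempty]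
  | succ n ih =>
    intro S hS
    rcases S.eq_empty_or_nonempty with rfl | hSne
    · simp [hempty]
    obtain ⟨M, hMS, hM, hbound⟩ := exists_slowAux_succ_le G hSne n
    obtain ⟨X, hXM, hind, hdrop⟩ := hstep S M hMS hM
    -- `X = ∅` would make the drop `Φ S - Φ S = 0`, below `|M| ≥ 1`.
    have hX : X.Nonempty := by
      rw [nonempty_iff_ne_empty]
      rintro rfl
      rw [sdiff_empty, sub_self] at hdrop
      have : (0 : ℝ) < M.card := by exact_mod_cast hM.card_pos
      linarith
    have hcard : (S \ X).card ≤ n := by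
      rw [card_sdiff_of_subset (hXM.trans hMS)]
      have := hX.card_pos
      omega
    calc (slowAux G (n + 1) S : ℝ) ≤ M.card + slowAux G n (S \ X) := by
          exact_mod_cast hbound X hXM hX hind
      _ ≤ (Φ S - Φ (S \ X)) + Φ (S \ X) := add_le_add hdrop (ih _ hcard)
      _ = Φ S := sub_add_cancel _ _

end SimpleGraph

theorem stmt_15 {V : Type*} [Fintype V] [DecidableEq V] (G : SimpleGraph V)
    (Φ : Finset V → ℝ) (hempty : Φ ∅ = 0)
    (hstep : ∀ S : Finset V, ∀ M ⊆ S, M.Nonempty →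
      ∃ X ⊆ M, (∀ x ∈ X, ∀ y ∈ X, ¬ G.Adj x y) ∧
        (M.card : ℝ) ≤ Φ S - Φ (S \ X)) :
    (∀ S : Finset V, (slowCost G S : ℝ) ≤ Φ S) ∧
      (slowCost G Finset.univ : ℝ) ≤ Φ Finset.univ := by
  have h (S : Finset V) : (slowCost G S : ℝ) ≤ Φ S :=
    G.slowAux_le_of_potential Φ hempty hstep S.card S le_rfl
  exact ⟨h, h _⟩
end

section
/- Let G be a k-colorable finite simple graph and let M ⊆ V(G) be such that the induced subgraph G[M] is connected. Let T be the set of vertices of M that lie on no cycle of G[M]. Then G[M] has a proper coloring with k colors such that for every connected component C of G[T] there are two colors a, b with the property that every vertex of C, and every vertex of M having a neighbor in C, receives color a or color b. -/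
/-!
Induct on `|M|`. If no vertex of `M` is acyclic (lies on no cycle of `G[M]`), any `k`-coloring
of `G` works. Otherwise delete an acyclic vertex `y`: the acyclic vertices of `M \ {y}` are
those of `M` other than `y`, and distinct neighbours of `y` lie in distinct components of
`G[M \ {y}]`, since a path between two of them would close a cycle through `y`. Permuting the
colors independently on each component of a good coloring of `G[M \ {y}]` keeps it good, so we
can give `y` a color `a`, every neighbour `n` of `y` a fixed color `b ≠ a`, and map the two
colors around the component of `n` in the acyclic part onto `{a, b}`.
-/

open Finset

/-- The graph on the same vertex set whose edges are the edges of `G` with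
both endpoints in `T`; its nontrivial connected components and its cycles
are those of the induced subgraph `G[T]`. -/
def SimpleGraph.restrictTo {W : Type*} (G : SimpleGraph W) (T : Set W) :
    SimpleGraph W where
  Adj u v := G.Adj u v ∧ u ∈ T ∧ v ∈ T
  symm := by
    constructor
    intro u v h
    exact ⟨h.1.symm, h.2.2, h.2.1⟩
  loopless := by
    constructor
    intro v h
    exact G.irrefl h.1

/-- A vertex lies on a cycle of a graph if some cycle of that graph passes
through it. -/
def LiesOnCycle {W : Type*} (H : SimpleGraph W) (v : W) : Prop :=
  ∃ (u : W) (c : H.Walk u u), c.IsCycle ∧ v ∈ c.support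

namespace SimpleGraph

variable {V α : Type*} {G : SimpleGraph V}

lemma restrictTo_mono {S S' : Set V} (h : S ⊆ S') : G.restrictTo S ≤ G.restrictTo S' :=
  fun _ _ huv => ⟨huv.1, h huv.2.1, h huv.2.2⟩

lemma restrictTo_le (S : Set V) : G.restrictTo S ≤ G :=
  fun _ _ huv => huv.1

lemma Walk.mem_of_mem_support_restrictTo {S : Set V} {u v w : V}
    (p : (G.restrictTo S).Walk u v) (hu : u ∈ S) (hw : w ∈ p.support) : w ∈ S := by
  induction p with
  | nil => simp_all
  | cons h q ih =>
    rw [Walk.support_cons, List.mem_cons] at hw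
    rcases hw with rfl | hw
    · exact hu
    · exact ih h.2.2 hw

lemma Walk.edges_subset_restrictTo {S : Set V} {H : SimpleGraph V} (hH : H ≤ G) {u v : V}
    (p : H.Walk u v) (hp : ∀ w ∈ p.support, w ∈ S) :
    ∀ e ∈ p.edges, e ∈ (G.restrictTo S).edgeSet := by
  intro e he
  induction e using Sym2.ind with
  | _ a b =>
    exact ⟨hH (p.adj_of_mem_edges he), hp a (p.fst_mem_support_of_mem_edges he),
      hp b (p.snd_mem_support_of_mem_edges he)⟩

lemma eq_of_reachable_restrictTo_of_notMem {S : Set V} {u v : V}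
    (h : (G.restrictTo S).Reachable u v) (hu : u ∉ S) : u = v := by
  obtain ⟨_ | ⟨huw, _⟩⟩ := h
  · rfl
  · exact absurd huw.2.1 hu

lemma reachable_restrictTo_diff_of_walk {T : Set V} {x v y : V}
    (p : (G.restrictTo T).Walk x v) (hx : x ∈ T) (hy : y ∉ p.support) :
    (G.restrictTo (T \ {y})).Reachable x v :=
  ⟨p.transfer _ <| p.edges_subset_restrictTo (restrictTo_le T) fun _ hw =>
    ⟨p.mem_of_mem_support_restrictTo hx hw, fun hwy => hy (hwy ▸ hw)⟩⟩

lemma reachable_restrictTo_diff_of_not_reachable {T : Set V} {x v y : V}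
    (h : (G.restrictTo T).Reachable x v) (hxy : ¬ (G.restrictTo T).Reachable x y) :
    (G.restrictTo (T \ {y})).Reachable x v := by
  classical
  by_cases hx : x ∈ T
  · obtain ⟨p⟩ := h
    exact reachable_restrictTo_diff_of_walk p hx fun hy => hxy ⟨p.takeUntil y hy⟩
  · exact eq_of_reachable_restrictTo_of_notMem h hx ▸ Reachable.refl _

lemma exists_adj_reachable_restrictTo_diff {T : Set V} {y v : V}
    (h : (G.restrictTo T).Reachable y v) (hvy : v ≠ y) :
    ∃ n, G.Adj y n ∧ n ∈ T ∧ (G.restrictTo (T \ {y})).Reachable n v := by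
  obtain ⟨p, hp⟩ := h.exists_isPath
  cases p with
  | nil => exact absurd rfl hvy
  | cons hyn q =>
    rw [Walk.cons_isPath_iff] at hp
    exact ⟨_, hyn.1, hyn.2.2, reachable_restrictTo_diff_of_walk q hyn.2.2 hp.2⟩

lemma LiesOnCycle.mono {H H' : SimpleGraph V} (hH : H ≤ H') {v : V} (h : LiesOnCycle H v) :
    LiesOnCycle H' v := by
  obtain ⟨u, c, hc, hv⟩ := h
  exact ⟨u, c.mapLe hH, hc.mapLe hH, by rwa [Walk.support_mapLe_eq_support]⟩

def acyclicPart (G : SimpleGraph V) (M : Set V) : Set V :=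
  {v | v ∈ M ∧ ¬ LiesOnCycle (G.restrictTo M) v}

lemma acyclicPart_subset (M : Set V) : G.acyclicPart M ⊆ M := fun _ h => h.1

lemma liesOnCycle_restrictTo_diff_iff {M : Set V} {y : V} (hy : y ∈ G.acyclicPart M) {v : V} :
    LiesOnCycle (G.restrictTo (M \ {y})) v ↔ LiesOnCycle (G.restrictTo M) v := by
  refine ⟨LiesOnCycle.mono (restrictTo_mono Set.sdiff_subset), ?_⟩
  rintro ⟨u, c, hc, hv⟩
  have hu : u ∈ M := (c.adj_snd hc.not_nil).2.1
  have hsupp : ∀ w ∈ c.support, w ∈ M \ {y} := fun w hw =>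
    ⟨c.mem_of_mem_support_restrictTo hu hw, fun hwy => hy.2 ⟨u, c, hc, hwy ▸ hw⟩⟩
  have hedges := c.edges_subset_restrictTo (restrictTo_le M) hsupp
  exact ⟨u, c.transfer _ hedges, hc.transfer hedges, by rwa [Walk.support_transfer]⟩

lemma acyclicPart_diff_singleton {M : Set V} {y : V} (hy : y ∈ G.acyclicPart M) :
    G.acyclicPart (M \ {y}) = G.acyclicPart M \ {y} := by
  ext v
  simp only [acyclicPart, liesOnCycle_restrictTo_diff_iff hy, Set.mem_sdiff, Set.mem_ofPred_eq]
  tauto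

/-- A path between two neighbours of `y` avoiding `y` would close a cycle through `y`. -/
lemma eq_of_reachable_restrictTo_diff {M : Set V} {y n₁ n₂ : V} (hy : y ∈ G.acyclicPart M)
    (h₁ : G.Adj y n₁) (h₂ : G.Adj y n₂) (hn₁ : n₁ ∈ M) (hn₂ : n₂ ∈ M)
    (hr : (G.restrictTo (M \ {y})).Reachable n₁ n₂) : n₁ = n₂ := by
  by_contra hne
  obtain ⟨p, hp⟩ := hr.exists_isPath
  have hyp : y ∉ p.support := fun hmem =>
    (p.mem_of_mem_support_restrictTo ⟨hn₁, h₁.ne'⟩ hmem).2 rfl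
  set q := p.mapLe (restrictTo_mono (G := G) (Set.sdiff_subset (t := {y})))
  have hyq : y ∉ q.support := by rwa [Walk.support_mapLe_eq_support]
  have hcycle : (Walk.cons (show (G.restrictTo M).Adj n₂ y from ⟨h₂.symm, hn₂, hy.1⟩)
      (Walk.cons (show (G.restrictTo M).Adj y n₁ from ⟨h₁, hy.1, hn₁⟩) q)).IsCycle := by
    refine (Walk.cons_isCycle_iff _ _).2 ⟨(hp.mapLe _).cons hyq, ?_⟩
    simp only [Walk.edges_cons, List.mem_cons, Sym2.eq_iff, not_or]
    exact ⟨⟨fun h => h₂.ne' h.1, fun h => hne h.1.symm⟩,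
      fun he => hyq (q.snd_mem_support_of_mem_edges he)⟩
  exact hy.2 ⟨n₂, _, hcycle, by simp⟩

lemma exists_perm_apply_eq_and_mem_pair {a b : α} (hab : a ≠ b) (c d : α) :
    ∃ π : Equiv.Perm α, π c = b ∧ (π d = a ∨ π d = b) := by
  classical
  by_cases hdc : d = c
  · exact ⟨Equiv.swap c b, by simp, by simp [hdc]⟩
  · have hd : Equiv.swap c b d ≠ b := by
      rw [Ne, Equiv.swap_apply_eq_iff, Equiv.swap_apply_right]
      exact hdc
    refine ⟨(Equiv.swap c b).trans (Equiv.swap (Equiv.swap c b d) a), ?_, by simp⟩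
    simp only [Equiv.trans_apply, Equiv.swap_apply_left]
    exact Equiv.swap_apply_of_ne_of_ne hd.symm hab.symm

section Coloring

variable (G)

def IsProperOn (M : Set V) (f : V → α) : Prop :=
  ∀ u ∈ M, ∀ v ∈ M, G.Adj u v → f u ≠ f v

def TwoColoredAt (M T : Set V) (f : V → α) (x : V) (a b : α) : Prop :=
  (∀ y ∈ T, (G.restrictTo T).Reachable x y → f y = a ∨ f y = b) ∧
  ∀ z ∈ M, (∃ y ∈ T, (G.restrictTo T).Reachable x y ∧ G.Adj z y) → f z = a ∨ f z = b

def TwoColored (M T : Set V) (f : V → α) : Prop :=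
  ∀ x ∈ T, ∃ a b, G.TwoColoredAt M T f x a b

variable {G}

lemma TwoColoredAt.mono {M T : Set V} {f : V → α} {x : V} {a b a' b' : α}
    (h : G.TwoColoredAt M T f x a b) (ha : a = a' ∨ a = b') (hb : b = a' ∨ b = b') :
    G.TwoColoredAt M T f x a' b' := by
  have key : ∀ c, c = a ∨ c = b → c = a' ∨ c = b' := by
    rintro c (rfl | rfl) <;> assumption
  exact ⟨fun y hy hr => key _ (h.1 y hy hr), fun z hz hzy => key _ (h.2 z hz hzy)⟩

lemma TwoColored.exists_twoColoredAt_self {M T : Set V} {f : V → α}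
    (h : G.TwoColored M T f) (x : V) : ∃ d, G.TwoColoredAt M T f x (f x) d := by
  by_cases hx : x ∈ T
  · obtain ⟨a, b, hab⟩ := h x hx
    rcases hab.1 x hx (Reachable.refl x) with hxa | hxb
    · exact ⟨b, hab.mono (.inl hxa.symm) (.inr rfl)⟩
    · exact ⟨a, hab.mono (.inr rfl) (.inl hxb.symm)⟩
  · refine ⟨f x, fun y _ hr => .inl ?_, fun z _ ⟨y, hy, hr, _⟩ => ?_⟩
    · rw [eq_of_reachable_restrictTo_of_notMem hr hx]
    · exact absurd (eq_of_reachable_restrictTo_of_notMem hr hx ▸ hy) hx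

def recolor {M : Set V} (σ : (G.restrictTo M).ConnectedComponent → Equiv.Perm α)
    (f : V → α) (v : V) : α :=
  σ ((G.restrictTo M).connectedComponentMk v) (f v)

lemma IsProperOn.recolor {M : Set V} {f : V → α} (hf : G.IsProperOn M f)
    (σ : (G.restrictTo M).ConnectedComponent → Equiv.Perm α) :
    G.IsProperOn M (recolor σ f) := by
  intro u hu v hv huv
  have hK := ConnectedComponent.sound (Adj.reachable (G := G.restrictTo M) ⟨huv, hu, hv⟩)
  simp only [SimpleGraph.recolor, hK]
  exact (σ _).injective.ne (hf u hu v hv huv)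

lemma TwoColoredAt.recolor {M T : Set V} (hTM : T ⊆ M) {f : V → α} {x : V} {a b : α}
    (h : G.TwoColoredAt M T f x a b) (σ : (G.restrictTo M).ConnectedComponent → Equiv.Perm α) :
    G.TwoColoredAt M T (recolor σ f) x (σ ((G.restrictTo M).connectedComponentMk x) a)
      (σ ((G.restrictTo M).connectedComponentMk x) b) := by
  have hK : ∀ y, (G.restrictTo T).Reachable x y →
      (G.restrictTo M).connectedComponentMk y = (G.restrictTo M).connectedComponentMk x :=
    fun y hr => (ConnectedComponent.sound (hr.mono (restrictTo_mono hTM))).symm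
  constructor
  · intro y hy hr
    simp only [SimpleGraph.recolor, hK y hr, EmbeddingLike.apply_eq_iff_eq]
    exact h.1 y hy hr
  · rintro z hz ⟨y, hy, hr, hzy⟩
    have hzK : (G.restrictTo M).connectedComponentMk z = (G.restrictTo M).connectedComponentMk x :=
      (ConnectedComponent.sound (Adj.reachable (G := G.restrictTo M) ⟨hzy, hz, hTM hy⟩)).trans
        (hK y hr)
    simp only [SimpleGraph.recolor, hzK, EmbeddingLike.apply_eq_iff_eq]
    exact h.2 z hz ⟨y, hy, hr, hzy⟩

lemma TwoColored.recolor {M T : Set V} (hTM : T ⊆ M) {f : V → α} (h : G.TwoColored M T f)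
    (σ : (G.restrictTo M).ConnectedComponent → Equiv.Perm α) :
    G.TwoColored M T (recolor σ f) := fun x hx =>
  let ⟨_, _, hab⟩ := h x hx
  ⟨_, _, hab.recolor hTM σ⟩

lemma IsProperOn.update_diff_singleton [DecidableEq V] {M : Set V} {y : V} {g : V → α}
    {a b : α} (hab : a ≠ b) (hg : G.IsProperOn (M \ {y}) g)
    (hb : ∀ n ∈ M, G.Adj y n → g n = b) : G.IsProperOn M (Function.update g y a) := by
  intro u hu v hv huv
  by_cases huy : u = y
  · subst huy
    simpa [huv.ne', hb v hv huv] using hab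
  by_cases hvy : v = y
  · subst hvy
    simpa [huy, hb u hu huv.symm] using hab.symm
  simpa [huy, hvy] using hg u ⟨hu, huy⟩ v ⟨hv, hvy⟩ huv

lemma TwoColored.update_diff_singleton [DecidableEq V] {M T : Set V} (hTM : T ⊆ M) {y : V}
    (hy : y ∈ T) {g : V → α} {a b : α} (hg : G.TwoColored (M \ {y}) (T \ {y}) g)
    (hb : ∀ n ∈ M, G.Adj y n → g n = b)
    (hn : ∀ n ∈ M, G.Adj y n → G.TwoColoredAt (M \ {y}) (T \ {y}) g n a b) :
    G.TwoColored M T (Function.update g y a) := by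
  intro x hx
  by_cases hxy : (G.restrictTo T).Reachable x y
  · -- the component of `y` in `G[T]` consists of `y` and the components of `G[T \ {y}]`
    -- at its neighbours
    refine ⟨a, b, fun v hv hr => ?_, fun z hz ⟨v, hv, hr, hzv⟩ => ?_⟩
    · by_cases hvy : v = y
      · simp [hvy]
      obtain ⟨n, hyn, hnT, hnv⟩ := exists_adj_reachable_restrictTo_diff (hxy.symm.trans hr) hvy
      simpa [hvy] using (hn n (hTM hnT) hyn).1 v ⟨hv, hvy⟩ hnv
    · by_cases hzy : z = y
      · simp [hzy]
      by_cases hvy : v = y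
      · subst hvy
        simp [hzy, hb z hz hzv.symm]
      obtain ⟨n, hyn, hnT, hnv⟩ := exists_adj_reachable_restrictTo_diff (hxy.symm.trans hr) hvy
      simpa [hzy] using (hn n (hTM hnT) hyn).2 z ⟨hz, hzy⟩ ⟨v, ⟨hv, hvy⟩, hnv, hzv⟩
  · have hxy' : x ≠ y := fun h => hxy (h ▸ Reachable.refl x)
    obtain ⟨a', b', hab'⟩ := hg x ⟨hx, hxy'⟩
    refine ⟨a', b', fun v hv hr => ?_, fun z hz ⟨v, hv, hr, hzv⟩ => ?_⟩
    · have hvy : v ≠ y := fun h => hxy (h ▸ hr)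
      simpa [hvy] using hab'.1 v ⟨hv, hvy⟩ (reachable_restrictTo_diff_of_not_reachable hr hxy)
    · have hvy : v ≠ y := fun h => hxy (h ▸ hr)
      have hzy : z ≠ y := by
        rintro rfl
        exact hxy (hr.trans (Adj.reachable ⟨hzv.symm, hv, hy⟩))
      simpa [hzy] using hab'.2 z ⟨hz, hzy⟩
        ⟨v, ⟨hv, hvy⟩, reachable_restrictTo_diff_of_not_reachable hr hxy, hzv⟩

lemma exists_isProperOn_twoColored_of_diff_singleton {M : Set V} {y : V}
    (hy : y ∈ G.acyclicPart M) {a b : α} (hab : a ≠ b) {g : V → α}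
    (hg : G.IsProperOn (M \ {y}) g)
    (hgT : G.TwoColored (M \ {y}) (G.acyclicPart (M \ {y})) g) :
    ∃ f : V → α, G.IsProperOn M f ∧ G.TwoColored M (G.acyclicPart M) f := by
  classical
  rw [acyclicPart_diff_singleton hy] at hgT
  have hTM : G.acyclicPart M \ {y} ⊆ M \ {y} :=
    Set.sdiff_subset_sdiff_left (acyclicPart_subset M)
  set R := G.restrictTo (M \ {y})
  choose d hd using hgT.exists_twoColoredAt_self
  -- each component of `R` contains at most one neighbour of `y`, whose colors prescribe `σ K`
  have hσ : ∀ K : R.ConnectedComponent, ∃ π : Equiv.Perm α, ∀ n ∈ M, G.Adj y n →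
      R.connectedComponentMk n = K → π (g n) = b ∧ (π (d n) = a ∨ π (d n) = b) := by
    intro K
    by_cases hK : ∃ n₀ ∈ M, G.Adj y n₀ ∧ R.connectedComponentMk n₀ = K
    · obtain ⟨n₀, hn₀, hyn₀, rfl⟩ := hK
      obtain ⟨π, hπ⟩ := exists_perm_apply_eq_and_mem_pair hab (g n₀) (d n₀)
      refine ⟨π, fun n hn hyn hnK => ?_⟩
      rwa [eq_of_reachable_restrictTo_diff hy hyn hyn₀ hn hn₀ (ConnectedComponent.exact hnK)]
    · exact ⟨1, fun n hn hyn hnK => absurd ⟨n, hn, hyn, hnK⟩ hK⟩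
  choose σ hσ using hσ
  have hb : ∀ n ∈ M, G.Adj y n → recolor σ g n = b := fun n hn hyn => (hσ _ n hn hyn rfl).1
  refine ⟨Function.update (recolor σ g) y a, (hg.recolor σ).update_diff_singleton hab hb,
    (hgT.recolor hTM σ).update_diff_singleton (acyclicPart_subset M) hy hb fun n hn hyn => ?_⟩
  obtain ⟨hgn, hdn⟩ := hσ _ n hn hyn rfl
  exact ((hd n).recolor hTM σ).mono (.inr hgn) hdn

lemma exists_isProperOn_twoColored_acyclicPart (C : G.Coloring α) {a b : α} (hab : a ≠ b)
    (M : Finset V) :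
    ∃ f : V → α, G.IsProperOn M f ∧ G.TwoColored M (G.acyclicPart M) f := by
  classical
  induction M using Finset.strongInduction with
  | H M ih =>
    by_cases hT : (G.acyclicPart M).Nonempty
    · obtain ⟨y, hy⟩ := hT
      obtain ⟨g, hg, hgT⟩ := ih (M.erase y) (Finset.erase_ssubset hy.1)
      rw [Finset.coe_erase] at hg hgT
      exact exists_isProperOn_twoColored_of_diff_singleton hy hab hg hgT
    · exact ⟨C, fun u _ v _ huv => C.valid huv, fun x hx => absurd ⟨x, hx⟩ hT⟩

end Coloring

end SimpleGraph

theorem stmt_16_general {V : Type*} (G : SimpleGraph V)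
    (k : ℕ) (hcol : G.Colorable k) (M : Finset V) :
    -- `T` is the set of vertices of `M` lying on no cycle of `G[M]`
    ∀ T : Set V, T = {v : V | v ∈ M ∧ ¬ LiesOnCycle (G.restrictTo ↑M) v} →
    ∃ f : V → Fin k,
      -- `f` is a proper `k`-coloring of `G[M]`
      (∀ u ∈ M, ∀ v ∈ M, G.Adj u v → f u ≠ f v) ∧
      -- for every connected component of `G[T]` (the component of `x ∈ T`):
      ∀ x ∈ T, ∃ a b : Fin k,
        (∀ y ∈ T, (G.restrictTo T).Reachable x y → (f y = a ∨ f y = b)) ∧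
        (∀ z ∈ M, (∃ y ∈ T, (G.restrictTo T).Reachable x y ∧ G.Adj z y) →
          (f z = a ∨ f z = b)) := by
  rintro T rfl
  obtain ⟨C⟩ := hcol
  rcases subsingleton_or_nontrivial (Fin k) with hk | hk
  · exact ⟨C, fun u _ v _ huv => C.valid huv, fun x _ => ⟨C x, C x,
      fun _ _ _ => .inl (Subsingleton.elim _ _), fun _ _ _ => .inl (Subsingleton.elim _ _)⟩⟩
  · obtain ⟨a, b, hab⟩ := exists_pair_ne (Fin k)
    exact G.exists_isProperOn_twoColored_acyclicPart C hab M

theorem stmt_16 {V : Type*} [Fintype V] [DecidableEq V] (G : SimpleGraph V)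
    (k : ℕ) (hcol : G.Colorable k) (M : Finset V)
    (hconn : (G.induce (↑M : Set V)).Connected) :
    -- `T` is the set of vertices of `M` lying on no cycle of `G[M]`
    ∀ T : Set V, T = {v : V | v ∈ M ∧ ¬ LiesOnCycle (G.restrictTo ↑M) v} →
    ∃ f : V → Fin k,
      -- `f` is a proper `k`-coloring of `G[M]`
      (∀ u ∈ M, ∀ v ∈ M, G.Adj u v → f u ≠ f v) ∧
      -- for every connected component of `G[T]` (the component of `x ∈ T`):
      ∀ x ∈ T, ∃ a b : Fin k,
        (∀ y ∈ T, (G.restrictTo T).Reachable x y → (f y = a ∨ f y = b)) ∧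
        (∀ z ∈ M, (∃ y ∈ T, (G.restrictTo T).Reachable x y ∧ G.Adj z y) →
          (f z = a ∨ f z = b)) :=
  stmt_16_general G k hcol M
end

section
/- Let G be a finite simple graph, M ⊆ V(G), and let V'_1, V'_2, V'_3, V'_4 be independent sets of G contained in M. For v ∈ V(G) let φ_G(v) = 1 + (1/5)·min(d_G(v), 3), and for an independent set X ⊆ M define u_X(v) = φ_G(v) + (3/5)·d_G(v) − 1 if v ∈ X; u_X(v) = φ_G(v) − φ_{G−X}(v) − 1 if v ∈ M∖X; and u_X(v) = φ_G(v) − φ_{G−X}(v) if v ∉ M, where G − X is the graph obtained from G by deleting the vertices of X. For x ∈ M let u(x) = Σ_{i=1}^{4} u_{V'_i}(x), let c(x) be the number of indices i with x ∈ V'_i, and let s(x) = Σ over neighbors y of x with y ∈ M of c(y). Then u(x) ≥ ((4/5)·d_G(x) + 1)·c(x) + (1/5)·s(x) − 4 if d_G(x) ≤ 3, and u(x) ≥ 4·c(x) − 4 if d_G(x) ≥ 4. -/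
/-!
When `d_G(x) ≤ 3` the potential is linear in the degree, so each term is exact:
`u_X(x) = ((4/5)·d_G(x) + 1)·[x ∈ X] + (1/5)·|N(x) ∩ X| - 1`, where independence of `X` makes
`N(x) ∩ X` empty when `x ∈ X`. Summing over the four sets and double counting the pairs
`(i, y)` with `y ∈ N(x) ∩ V'_i` turns `Σ_i |N(x) ∩ V'_i|` into `s(x)`, giving even equality.
When `d_G(x) ≥ 4`, a term with `x ∈ X` is at least `3/5 + 12/5 = 3`, and any other term is at
least `-1` because deleting vertices cannot raise the potential.
-/

open Finset

variable {V : Type*} [Fintype V] [DecidableEq V]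

/-- The vertex potential `φ_G(v) = 1 + (1/5)·min(d_G(v),3)`. -/
noncomputable def phi (G : SimpleGraph V) [DecidableRel G.Adj] (v : V) : ℝ :=
  1 + (1 / 5 : ℝ) * (min (G.degree v) 3 : ℕ)

/-- The vertex potential of `v` in the graph `G − X` obtained by deleting
the vertices of `X`: the degree of `v` there is the number of neighbors of
`v` outside `X`. -/
noncomputable def phiDel (G : SimpleGraph V) [DecidableRel G.Adj]
    (X : Finset V) (v : V) : ℝ :=
  1 + (1 / 5 : ℝ) * (min ((G.neighborFinset v \ X).card) 3 : ℕ)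

/-- The utility contribution `u_X(v)` of vertex `v` for the marked set `M`
and the independent set `X ⊆ M`. -/
noncomputable def utilAt (G : SimpleGraph V) [DecidableRel G.Adj]
    (M X : Finset V) (v : V) : ℝ :=
  if v ∈ X then phi G v + (3 / 5 : ℝ) * (G.degree v : ℝ) - 1
  else if v ∈ M then phi G v - phiDel G X v - 1
  else phi G v - phiDel G X v

section

variable (G : SimpleGraph V) [DecidableRel G.Adj] {M X : Finset V} {x : V}

lemma phiDel_le_phi (X : Finset V) (v : V) : phiDel G X v ≤ phi G v := by
  unfold phiDel phi
  gcongr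
  rw [← G.card_neighborFinset_eq_degree]
  exact card_le_card sdiff_subset

lemma phi_sub_phiDel_of_degree_le_three (hd : G.degree x ≤ 3) :
    phi G x - phiDel G X x = (1 / 5 : ℝ) * #(G.neighborFinset x ∩ X) := by
  have hsplit : #(G.neighborFinset x \ X) + #(G.neighborFinset x ∩ X) = G.degree x := by
    rw [card_sdiff_add_card_inter, G.card_neighborFinset_eq_degree]
  have hsplit' : (#(G.neighborFinset x \ X) : ℝ) + #(G.neighborFinset x ∩ X) = G.degree x := by
    exact_mod_cast hsplit
  unfold phi phiDel
  rw [min_eq_left hd, min_eq_left (by omega)]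
  linarith

lemma utilAt_eq_of_degree_le_three (hxM : x ∈ M) (hX : ∀ y ∈ X, ∀ z ∈ X, ¬ G.Adj y z)
    (hd : G.degree x ≤ 3) :
    utilAt G M X x = ((4 / 5 : ℝ) * G.degree x + 1) * (if x ∈ X then 1 else 0)
      + (1 / 5 : ℝ) * #(G.neighborFinset x ∩ X) - 1 := by
  by_cases hxX : x ∈ X
  · have hnone : G.neighborFinset x ∩ X = ∅ :=
      eq_empty_of_forall_notMem fun y hy ↦
        hX x hxX y (mem_inter.1 hy).2 ((G.mem_neighborFinset x y).1 (mem_inter.1 hy).1)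
    simp only [utilAt, phi, if_pos hxX, min_eq_left hd, hnone, card_empty]
    ring
  · rw [utilAt, if_neg hxX, if_pos hxM, phi_sub_phiDel_of_degree_le_three G hd, if_neg hxX]
    ring

lemma four_mul_indicator_sub_one_le_utilAt (hxM : x ∈ M) (hd : 4 ≤ G.degree x) :
    4 * (if x ∈ X then 1 else 0) - 1 ≤ utilAt G M X x := by
  by_cases hxX : x ∈ X
  · have hd' : (4 : ℝ) ≤ G.degree x := by exact_mod_cast hd
    rw [utilAt, if_pos hxX, if_pos hxX, phi, min_eq_right (by omega)]
    push_cast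
    linarith
  · rw [utilAt, if_neg hxX, if_neg hxX, if_pos hxM]
    linarith [phiDel_le_phi G X x]

lemma sum_card_neighborFinset_inter {ι : Type*} [Fintype ι] (Vs : ι → Finset V)
    (hsub : ∀ i, Vs i ⊆ M) (x : V) :
    ∑ i, #(G.neighborFinset x ∩ Vs i) = ∑ y ∈ G.neighborFinset x ∩ M, #{i | y ∈ Vs i} := by
  have hfilter : ∀ i, G.neighborFinset x ∩ Vs i = {y ∈ G.neighborFinset x ∩ M | y ∈ Vs i} := by
    intro i
    ext y
    simp only [mem_inter, mem_filter]
    exact ⟨fun ⟨hN, hV⟩ ↦ ⟨⟨hN, hsub i hV⟩, hV⟩, fun ⟨⟨hN, _⟩, hV⟩ ↦ ⟨hN, hV⟩⟩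
  simp_rw [hfilter, card_filter]
  rw [sum_comm]

end

theorem stmt_17 (G : SimpleGraph V) [DecidableRel G.Adj]
    (M : Finset V) (Vs : Fin 4 → Finset V)
    (hsub : ∀ i, Vs i ⊆ M)
    (hind : ∀ i, ∀ x ∈ Vs i, ∀ y ∈ Vs i, ¬ G.Adj x y)
    -- `c x` is the number of indices `i` with `x ∈ V'_i`
    (c : V → ℕ) (hc : ∀ x, c x = (Finset.univ.filter fun i : Fin 4 => x ∈ Vs i).card)
    -- `s x` is the sum of `c y` over neighbors `y` of `x` with `y ∈ M`
    (s : V → ℕ) (hs : ∀ x, s x = ∑ y ∈ G.neighborFinset x ∩ M, c y)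
    -- `u x` is the total utility of `x`
    (u : V → ℝ) (hu : ∀ x, u x = ∑ i : Fin 4, utilAt G M (Vs i) x)
    (x : V) (hx : x ∈ M) :
    (G.degree x ≤ 3 →
      ((4 / 5 : ℝ) * G.degree x + 1) * c x + (1 / 5 : ℝ) * s x - 4 ≤ u x) ∧
    (4 ≤ G.degree x → 4 * (c x : ℝ) - 4 ≤ u x) := by
  have hcx : (c x : ℝ) = ∑ i, if x ∈ Vs i then 1 else 0 := by
    rw [sum_boole, hc]
  have hsx : (s x : ℝ) = ∑ i, (#(G.neighborFinset x ∩ Vs i) : ℝ) := by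
    simp_rw [hs, hc]
    rw [← sum_card_neighborFinset_inter G Vs hsub x, Nat.cast_sum]
  refine ⟨fun hd ↦ ?_, fun hd ↦ ?_⟩
  · rw [hu, hcx, hsx]
    simp_rw [utilAt_eq_of_degree_le_three G hx (hind _) hd]
    simp only [sum_sub_distrib, sum_add_distrib, ← mul_sum, sum_const, card_univ,
      Fintype.card_fin]
    norm_num
  · calc 4 * (c x : ℝ) - 4 = ∑ i, (4 * (if x ∈ Vs i then 1 else 0) - 1 : ℝ) := by
          simp only [hcx, sum_sub_distrib, ← mul_sum, sum_const, card_univ, Fintype.card_fin]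
          norm_num
      _ ≤ u x := by
          rw [hu]
          exact sum_le_sum fun i _ ↦ four_mul_indicator_sub_one_le_utilAt G hx hd
end
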